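/- arXiv:math/0505362 — 10 statements merged into one kernel-verified Lean document; each statement's English description precedes it below -/
import Mathlib

section
/- Suppose β ∈ C(S) satisfies ‖β‖ ≤ ‖v‖ for every v ∈ C(S) (i.e. β is the point of C(S) closest to the origin) and β ≠ 0. Then the directed graph G(S) contains no directed loops. -/
/-!
A directed loop `p 0 → p 1 → ⋯ → p r = p 0` in `G(S)` makes the average of its edge vectors
`e (p l) - e (p (l + 1))` telescope to `0`, so `0 ∈ C(S)`; the closest point to the origin then
has norm `0`.
-/

open Finset

theorem zero_mem_convexHull_sub_of_closed_walk {𝕜 E ι : Type*} [Field 𝕜] [LinearOrder 𝕜]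
    [IsStrictOrderedRing 𝕜] [AddCommGroup E] [Module 𝕜 E] (f : ι → E) (S : Set (ι × ι))
    {r : ℕ} (hr : 1 ≤ r) {p : ℕ → ι} (hclosed : p r = p 0)
    (hstep : ∀ l < r, (p l, p (l + 1)) ∈ S) :
    (0 : E) ∈ convexHull 𝕜 ((fun q : ι × ι => f q.1 - f q.2) '' S) := by
  have htelescope : ∑ l ∈ range r, (r : 𝕜)⁻¹ • (f (p l) - f (p (l + 1))) = 0 := by
    rw [← smul_sum, sum_range_sub' (fun l => f (p l)), hclosed, sub_self, smul_zero]
  rw [← htelescope]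
  refine (convex_convexHull 𝕜 _).sum_mem (fun _ _ => by positivity) ?_ fun l hl =>
    subset_convexHull 𝕜 _ ⟨(p l, p (l + 1)), hstep l (mem_range.mp hl), rfl⟩
  rw [sum_const, card_range, nsmul_eq_mul]
  exact mul_inv_cancel₀ (by positivity)

theorem stmt0_general {V : Type*} [NormedAddCommGroup V] [InnerProductSpace ℝ V]
    (n : ℕ) (e : Fin (n + 1) → V)
    (S : Finset (Fin (n + 1) × Fin (n + 1)))
    (β : V)
    (hmin : ∀ v ∈ convexHull ℝ
      ((fun p : Fin (n + 1) × Fin (n + 1) => e p.1 - e p.2) '' ↑S), ‖β‖ ≤ ‖v‖)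
    (hβ : β ≠ 0) :
    ¬ ∃ (r : ℕ) (p : ℕ → Fin (n + 1)),
        1 ≤ r ∧ p r = p 0 ∧ ∀ l < r, (p l, p (l + 1)) ∈ S := by
  rintro ⟨r, p, hr, hclosed, hstep⟩
  have hβ_le := hmin 0 (zero_mem_convexHull_sub_of_closed_walk e _ hr hclosed hstep)
  exact hβ (norm_le_zero_iff.mp (hβ_le.trans_eq norm_zero))

/-- If β is the (nonzero) point of C(S) = convexHull {e_i - e_j : (i,j) ∈ S}
closest to the origin, then the directed graph G(S) contains no directed loops. -/
theorem stmt0 {V : Type*} [NormedAddCommGroup V] [InnerProductSpace ℝ V]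
    (n : ℕ) (hn : 1 ≤ n) (e : Fin (n + 1) → V)
    (he : ∀ i, e i ≠ 0)
    (horth : ∀ i j, i ≠ j → inner ℝ (e i) (e j) = (0 : ℝ))
    (S : Finset (Fin (n + 1) × Fin (n + 1))) (hS : S.Nonempty)
    (β : V)
    (hmem : β ∈ convexHull ℝ
      ((fun p : Fin (n + 1) × Fin (n + 1) => e p.1 - e p.2) '' ↑S))
    (hmin : ∀ v ∈ convexHull ℝ
      ((fun p : Fin (n + 1) × Fin (n + 1) => e p.1 - e p.2) '' ↑S), ‖β‖ ≤ ‖v‖)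
    (hβ : β ≠ 0) :
    ¬ ∃ (r : ℕ) (p : ℕ → Fin (n + 1)),
        1 ≤ r ∧ p r = p 0 ∧ ∀ l < r, (p l, p (l + 1)) ∈ S :=
  stmt0_general n e S β hmin hβ
end

section
/- Suppose the point of C(S) closest to the origin is nonzero, and suppose there exists a real number λ > 0 such that λ·(e₁ + e₂ + ⋯ + e_{M−1} − (M−1)e_M) ∈ C(S). Then M is the only vertex of G(S) with no outgoing edges; that is, there is no j with (M,j) ∈ S, while for every i ∈ {1,…,M−1} there exists some j with (i,j) ∈ S. -/
/-!
Write `M` for `Fin.last n`. If a nonempty set `R` of vertices is closed under the edges of `S`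
and misses `M`, the functional `v ↦ ∑_{k ∈ R} ⟪e k, v⟫ / ‖e k‖²` is `≤ 0` on every edge vector,
hence on `C(S)`, but equals `λ · #R > 0` at the point of the ray; so every such `R` contains `M`.
Applied to `{i}` for a sink `i`, this gives `i = M`. Applied to the vertices reachable from a
successor `j` of `M`, it gives a directed loop through `M`, and a loop puts `0` into `C(S)`,
contradicting the minimality of `β ≠ 0`.
-/

open Finset
open scoped RealInnerProductSpace

theorem Convex.exists_pos_smul_sub_mem_of_transGen {V ι : Type*} [AddCommGroup V] [Module ℝ V]
    {H : Set V} (hH : Convex ℝ H) {x : ι → V} {r : ι → ι → Prop}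
    (hr : ∀ a b, r a b → x a - x b ∈ H) {a b : ι} (h : Relation.TransGen r a b) :
    ∃ t : ℝ, 0 < t ∧ t • (x a - x b) ∈ H := by
  induction h with
  | single hab => exact ⟨1, one_pos, by simpa using hr _ _ hab⟩
  | @tail b c _ hbc ih =>
    obtain ⟨t, ht, hmem⟩ := ih
    -- `(1 + t)⁻¹ • t • (x a - x b) + (t / (1 + t)) • (x b - x c) = (t / (1 + t)) • (x a - x c)`
    refine ⟨t / (1 + t), by positivity, ?_⟩
    have hcomb := hH hmem (hr _ _ hbc) (a := 1 / (1 + t)) (b := t / (1 + t))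
      (by positivity) (by positivity) (by field_simp)
    convert hcomb using 1
    module

section InnerProductSpace

variable {V ι : Type*} [NormedAddCommGroup V] [InnerProductSpace ℝ V] [DecidableEq ι]

theorem exists_inner_eq_indicator_of_orthogonal {e : ι → V}
    (he : ∀ i, e i ≠ 0) (horth : ∀ i j, i ≠ j → ⟪e i, e j⟫ = 0) (R : Finset ι) :
    ∃ u : V, ∀ a, ⟪u, e a⟫ = if a ∈ R then 1 else 0 := by
  refine ⟨∑ k ∈ R, (‖e k‖ ^ 2)⁻¹ • e k, fun a => ?_⟩
  have hterm : ∀ k, (‖e k‖ ^ 2)⁻¹ * ⟪e k, e a⟫ = if k = a then 1 else 0 := by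
    intro k
    split_ifs with hka
    · rw [hka, real_inner_self_eq_norm_sq, inv_mul_cancel₀ (by simpa using he a)]
    · rw [horth k a hka, mul_zero]
  simp only [sum_inner, real_inner_smul_left, hterm, sum_ite_eq']

theorem inner_nonpos_of_mem_convexHull_of_closed {e : ι → V} {S : Set (ι × ι)} {R : Finset ι}
    {u : V} (hu : ∀ a, ⟪u, e a⟫ = if a ∈ R then 1 else 0)
    (hR : ∀ p ∈ S, p.1 ∈ R → p.2 ∈ R) {v : V}
    (hv : v ∈ convexHull ℝ ((fun p : ι × ι => e p.1 - e p.2) '' S)) : ⟪u, v⟫ ≤ 0 := by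
  refine convexHull_min ?_ (convex_halfSpace_le (innerₗ V u).isLinear 0) hv
  rintro _ ⟨p, hp, rfl⟩
  have hp_closed := hR p hp
  simp only [Set.mem_ofPred_eq, innerₗ_apply_apply, inner_sub_right, hu]
  split_ifs <;> simp_all

theorem inner_sum_castSucc_sub_smul_last {n : ℕ} {e : Fin (n + 1) → V} {R : Finset (Fin (n + 1))}
    {u : V} (hu : ∀ a, ⟪u, e a⟫ = if a ∈ R then 1 else 0) (hlast : Fin.last n ∉ R) :
    ⟪u, (∑ i : Fin n, e i.castSucc) - (n : ℝ) • e (Fin.last n)⟫ = #R := by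
  have hcard : ∑ k : Fin (n + 1), (if k ∈ R then (1 : ℝ) else 0) = #R := by
    rw [sum_boole, filter_mem_eq_inter, univ_inter]
  rw [Fin.sum_univ_castSucc, if_neg hlast, add_zero] at hcard
  simp only [inner_sub_right, inner_sum, real_inner_smul_right, hu, if_neg hlast, mul_zero,
    sub_zero, hcard]

theorem smul_ray_notMem_convexHull_of_closed {n : ℕ} {e : Fin (n + 1) → V}
    (he : ∀ i, e i ≠ 0) (horth : ∀ i j, i ≠ j → ⟪e i, e j⟫ = 0)
    {S : Set (Fin (n + 1) × Fin (n + 1))} {R : Finset (Fin (n + 1))}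
    (hR : ∀ p ∈ S, p.1 ∈ R → p.2 ∈ R) (hne : R.Nonempty) (hlast : Fin.last n ∉ R)
    {lam : ℝ} (hlam : 0 < lam) :
    lam • ((∑ i : Fin n, e i.castSucc) - (n : ℝ) • e (Fin.last n)) ∉
      convexHull ℝ ((fun p : Fin (n + 1) × Fin (n + 1) => e p.1 - e p.2) '' S) := by
  obtain ⟨u, hu⟩ := exists_inner_eq_indicator_of_orthogonal he horth R
  intro hmem
  have hnonpos := inner_nonpos_of_mem_convexHull_of_closed hu hR hmem
  rw [real_inner_smul_right, inner_sum_castSucc_sub_smul_last hu hlast] at hnonpos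
  have hcard : (0 : ℝ) < #R := by exact_mod_cast hne.card_pos
  nlinarith

end InnerProductSpace

theorem stmt1_general {V : Type*} [NormedAddCommGroup V] [InnerProductSpace ℝ V]
    (n : ℕ) (e : Fin (n + 1) → V)
    (he : ∀ i, e i ≠ 0)
    (horth : ∀ i j, i ≠ j → inner ℝ (e i) (e j) = (0 : ℝ))
    (S : Finset (Fin (n + 1) × Fin (n + 1)))
    (β : V)
    (hmin : ∀ v ∈ convexHull ℝ
      ((fun p : Fin (n + 1) × Fin (n + 1) => e p.1 - e p.2) '' ↑S), ‖β‖ ≤ ‖v‖)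
    (hβ : β ≠ 0)
    (hray : ∃ lam : ℝ, 0 < lam ∧
      lam • ((∑ i : Fin n, e i.castSucc) - (n : ℝ) • e (Fin.last n)) ∈
        convexHull ℝ ((fun p : Fin (n + 1) × Fin (n + 1) => e p.1 - e p.2) '' ↑S)) :
    (∀ j, (Fin.last n, j) ∉ S) ∧
      (∀ i : Fin (n + 1), i ≠ Fin.last n → ∃ j, (i, j) ∈ S) := by
  classical
  obtain ⟨lam, hlam, hmem⟩ := hray
  have hclosed_last : ∀ R : Finset (Fin (n + 1)), (∀ p ∈ S, p.1 ∈ R → p.2 ∈ R) →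
      R.Nonempty → Fin.last n ∈ R := fun R hR hne => by
    by_contra hlast
    exact smul_ray_notMem_convexHull_of_closed he horth hR hne hlast hlam hmem
  set r : Fin (n + 1) → Fin (n + 1) → Prop := fun a b => (a, b) ∈ S
  have hedge : ∀ a b, r a b → e a - e b ∈ convexHull ℝ
      ((fun p : Fin (n + 1) × Fin (n + 1) => e p.1 - e p.2) '' ↑S) :=
    fun a b hab => subset_convexHull ℝ _ (Set.mem_image_of_mem _ hab)
  refine ⟨fun j hj => ?_, fun i hi => ?_⟩
  · have hreach := hclosed_last {k | Relation.ReflTransGen r j k}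
      (fun p hp hp1 => by simpa using (mem_filter.1 hp1).2.tail hp)
      ⟨j, mem_filter.2 ⟨mem_univ j, .refl⟩⟩
    obtain ⟨t, -, hzero⟩ := (convex_convexHull ℝ _).exists_pos_smul_sub_mem_of_transGen hedge
      (Relation.TransGen.head' (r := r) hj (mem_filter.1 hreach).2)
    rw [sub_self, smul_zero] at hzero
    exact hβ (norm_le_zero_iff.1 (by simpa using hmin 0 hzero))
  · by_contra! hsink
    have hlast := hclosed_last {i}
      (fun ⟨a, b⟩ hp ha => absurd (mem_singleton.1 ha ▸ hp) (hsink b)) (singleton_nonempty i)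
    exact hi (mem_singleton.1 hlast).symm

/-- If the point of C(S) closest to the origin is nonzero and the ray
ℝ₊(e₁ + ⋯ + e_{M−1} − (M−1)e_M) meets C(S), then M (here `Fin.last n`) is the only
vertex of G(S) with no outgoing edges. -/
theorem stmt1 {V : Type*} [NormedAddCommGroup V] [InnerProductSpace ℝ V]
    (n : ℕ) (hn : 1 ≤ n) (e : Fin (n + 1) → V)
    (he : ∀ i, e i ≠ 0)
    (horth : ∀ i j, i ≠ j → inner ℝ (e i) (e j) = (0 : ℝ))
    (S : Finset (Fin (n + 1) × Fin (n + 1))) (hS : S.Nonempty)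
    (β : V)
    (hmem : β ∈ convexHull ℝ
      ((fun p : Fin (n + 1) × Fin (n + 1) => e p.1 - e p.2) '' ↑S))
    (hmin : ∀ v ∈ convexHull ℝ
      ((fun p : Fin (n + 1) × Fin (n + 1) => e p.1 - e p.2) '' ↑S), ‖β‖ ≤ ‖v‖)
    (hβ : β ≠ 0)
    (hray : ∃ lam : ℝ, 0 < lam ∧
      lam • ((∑ i : Fin n, e i.castSucc) - (n : ℝ) • e (Fin.last n)) ∈
        convexHull ℝ ((fun p : Fin (n + 1) × Fin (n + 1) => e p.1 - e p.2) '' ↑S)) :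
    (∀ j, (Fin.last n, j) ∉ S) ∧
      (∀ i : Fin (n + 1), i ≠ Fin.last n → ∃ j, (i, j) ∈ S) :=
  stmt1_general n e he horth S β hmin hβ hray
end

section
/- Suppose the point of C(S) closest to the origin is nonzero, and suppose there exists a real number λ > 0 such that λ·(e₁ + e₂ + ⋯ + e_{M−1} − (M−1)e_M) ∈ C(S). Then the directed graph G(S) is connected: for any two vertices u, v ∈ {1,…,M} there is a finite sequence u = k₀, k₁, …, k_s = v such that for each l either (k_l, k_{l+1}) ∈ S or (k_{l+1}, k_l) ∈ S. -/
/-!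
Let `A` be the set of vertices not joined to `M` in `G(S)`. Every edge of `G(S)` lies inside
`A` or outside it, so the functional `x ↦ ∑_{i ∈ A} ⟪e i, x⟫ / ‖e i‖²` kills every generator
`e i - e j` of `C(S)`, hence all of `C(S)`. On the ray point `λ (e₁ + ⋯ + e_{M-1} - (M-1) e_M)`
it takes the value `λ |A|`, because `M ∉ A`; so `A = ∅`.
-/

open Finset SimpleGraph

section Graph

variable {ι : Type*} (S : Finset (ι × ι))

def underlyingGraph : SimpleGraph ι :=
  SimpleGraph.fromRel fun a b => (a, b) ∈ S

variable {S}

lemma underlyingGraph_reachable_of_mem {a b : ι} (h : (a, b) ∈ S) :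
    (underlyingGraph S).Reachable a b := by
  by_cases hab : a = b
  · exact hab ▸ Reachable.refl a
  · exact Adj.reachable ⟨hab, Or.inl h⟩

lemma underlyingGraph_reachable_iff_of_mem {a b c : ι} (h : (a, b) ∈ S) :
    (underlyingGraph S).Reachable a c ↔ (underlyingGraph S).Reachable b c :=
  ⟨(underlyingGraph_reachable_of_mem h).symm.trans, (underlyingGraph_reachable_of_mem h).trans⟩

lemma exists_chain_of_underlyingGraph_reachable {u v : ι}
    (h : (underlyingGraph S).Reachable u v) :
    ∃ (s : ℕ) (k : ℕ → ι), k 0 = u ∧ k s = v ∧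
      ∀ l < s, (k l, k (l + 1)) ∈ S ∨ (k (l + 1), k l) ∈ S := by
  obtain ⟨p⟩ := h
  exact ⟨p.length, p.getVert, p.getVert_zero, p.getVert_length,
    fun l hl => (p.adj_getVert_succ hl).2⟩

end Graph

lemma map_eq_zero_of_mem_convexHull_sub {ι V W : Type*} [AddCommGroup V] [Module ℝ V]
    [AddCommGroup W] [Module ℝ W] (φ : V →ₗ[ℝ] W) {e : ι → V} {S : Finset (ι × ι)}
    (hφ : ∀ p ∈ S, φ (e p.1) = φ (e p.2)) {x : V}
    (hx : x ∈ convexHull ℝ ((fun p : ι × ι => e p.1 - e p.2) '' ↑S)) :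
    φ x = 0 := by
  suffices convexHull ℝ ((fun p : ι × ι => e p.1 - e p.2) '' ↑S) ⊆ LinearMap.ker φ from this hx
  refine convexHull_min ?_ (Submodule.convex _)
  rintro _ ⟨p, hp, rfl⟩
  simp [hφ p hp]

section Orthogonal

variable {V ι : Type*} [NormedAddCommGroup V] [InnerProductSpace ℝ V] [DecidableEq ι]
  {e : ι → V}

noncomputable def coordSum (e : ι → V) (A : Finset ι) : V →L[ℝ] ℝ :=
  ∑ i ∈ A, (‖e i‖ ^ 2)⁻¹ • innerSL ℝ (e i)

lemma coordSum_apply (he : ∀ i, e i ≠ 0) (horth : Pairwise fun i j => inner ℝ (e i) (e j) = 0)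
    (A : Finset ι) (a : ι) : coordSum e A (e a) = if a ∈ A then 1 else 0 := by
  have hterm : ∀ i, (‖e i‖ ^ 2)⁻¹ * inner ℝ (e i) (e a) = if i = a then 1 else 0 := by
    intro i
    split_ifs with hia
    · rw [hia, real_inner_self_eq_norm_sq, inv_mul_cancel₀ (by simpa using he a)]
    · rw [horth hia, mul_zero]
  simp only [coordSum, _root_.sum_apply, smul_apply,
    innerSL_apply_apply, smul_eq_mul, hterm, Finset.sum_ite_eq']

end Orthogonal

lemma coordSum_ray {V : Type*} [NormedAddCommGroup V] [InnerProductSpace ℝ V] {n : ℕ}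
    {e : Fin (n + 1) → V} (he : ∀ i, e i ≠ 0)
    (horth : Pairwise fun i j => inner ℝ (e i) (e j) = 0) {A : Finset (Fin (n + 1))}
    (hlast : Fin.last n ∉ A) :
    coordSum e A ((∑ i : Fin n, e i.castSucc) - (n : ℝ) • e (Fin.last n)) = #A := by
  have hcard : (#A : ℝ) = ∑ i : Fin (n + 1), if i ∈ A then 1 else 0 := by
    simp
  simp only [map_sub, map_sum, map_smul, coordSum_apply he horth, hcard,
    Fin.sum_univ_castSucc (fun i => if i ∈ A then (1 : ℝ) else 0), hlast]
  simp

theorem stmt2_general {V : Type*} [NormedAddCommGroup V] [InnerProductSpace ℝ V]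
    (n : ℕ) (e : Fin (n + 1) → V)
    (he : ∀ i, e i ≠ 0)
    (horth : ∀ i j, i ≠ j → inner ℝ (e i) (e j) = (0 : ℝ))
    (S : Finset (Fin (n + 1) × Fin (n + 1)))
    (hray : ∃ lam : ℝ, 0 < lam ∧
      lam • ((∑ i : Fin n, e i.castSucc) - (n : ℝ) • e (Fin.last n)) ∈
        convexHull ℝ ((fun p : Fin (n + 1) × Fin (n + 1) => e p.1 - e p.2) '' ↑S)) :
    ∀ u v : Fin (n + 1), ∃ (s : ℕ) (k : ℕ → Fin (n + 1)),
      k 0 = u ∧ k s = v ∧ ∀ l < s, (k l, k (l + 1)) ∈ S ∨ (k (l + 1), k l) ∈ S := by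
  classical
  obtain ⟨lam, hlam, hmem⟩ := hray
  set A := univ.filter fun i => ¬ (underlyingGraph S).Reachable i (Fin.last n)
  have hA : ∀ p ∈ S, p.1 ∈ A ↔ p.2 ∈ A := fun p hp => by
    simp [A, underlyingGraph_reachable_iff_of_mem hp]
  have hlast : Fin.last n ∉ A := by simp [A]
  have hzero := map_eq_zero_of_mem_convexHull_sub (coordSum e A : V →ₗ[ℝ] ℝ)
    (fun p hp => by simp [coordSum_apply he horth, hA p hp]) hmem
  rw [ContinuousLinearMap.coe_coe, map_smul, coordSum_ray he horth hlast, smul_eq_mul] at hzero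
  have hreach : ∀ u, (underlyingGraph S).Reachable u (Fin.last n) := by
    simpa [A, hlam.ne', Finset.eq_empty_iff_forall_notMem] using hzero
  exact fun u v => exists_chain_of_underlyingGraph_reachable ((hreach u).trans (hreach v).symm)

/-- If the point of C(S) closest to the origin is nonzero and the ray
ℝ₊(e₁ + ⋯ + e_{M−1} − (M−1)e_M) meets C(S), then the directed graph G(S) is connected
(disregarding orientation of the edges). -/
theorem stmt2 {V : Type*} [NormedAddCommGroup V] [InnerProductSpace ℝ V]
    (n : ℕ) (hn : 1 ≤ n) (e : Fin (n + 1) → V)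
    (he : ∀ i, e i ≠ 0)
    (horth : ∀ i j, i ≠ j → inner ℝ (e i) (e j) = (0 : ℝ))
    (S : Finset (Fin (n + 1) × Fin (n + 1))) (hS : S.Nonempty)
    (β : V)
    (hmem : β ∈ convexHull ℝ
      ((fun p : Fin (n + 1) × Fin (n + 1) => e p.1 - e p.2) '' ↑S))
    (hmin : ∀ v ∈ convexHull ℝ
      ((fun p : Fin (n + 1) × Fin (n + 1) => e p.1 - e p.2) '' ↑S), ‖β‖ ≤ ‖v‖)
    (hβ : β ≠ 0)
    (hray : ∃ lam : ℝ, 0 < lam ∧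
      lam • ((∑ i : Fin n, e i.castSucc) - (n : ℝ) • e (Fin.last n)) ∈
        convexHull ℝ ((fun p : Fin (n + 1) × Fin (n + 1) => e p.1 - e p.2) '' ↑S)) :
    ∀ u v : Fin (n + 1), ∃ (s : ℕ) (k : ℕ → Fin (n + 1)),
      k 0 = u ∧ k s = v ∧ ∀ l < s, (k l, k (l + 1)) ∈ S ∨ (k (l + 1), k l) ∈ S :=
  stmt2_general n e he horth S hray
end

section
/- Suppose that in the directed graph G(S₀) every vertex i ∈ {1,…,M−1} has exactly one outgoing edge, the vertex M has no outgoing edge, and G(S₀) is connected. Then for any family of vectors e₁,…,e_M in a real vector space there exist a real number λ > 0 and strictly positive reals λ_{ij} > 0 for (i,j) ∈ S₀ with Σ_{(i,j)∈S₀} λ_{ij} = 1 such that λ·(e₁ + e₂ + ⋯ + e_{M−1} − (M−1)e_M) = Σ_{(i,j)∈S₀} λ_{ij}·(e_i − e_j); in other words, the ray ℝ₊(e₁ + ⋯ + e_{M−1} − (M−1)e_M) meets the set of strictly positive convex combinations of {e_i − e_j : (i,j) ∈ S₀}. -/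
open Finset Function

/-- If in G(S₀) every vertex other than M (= `Fin.last n`) has exactly one
outgoing edge, M has none, and G(S₀) is connected, then for any vectors e₁,…,e_M in a real
vector space the ray ℝ₊(e₁ + ⋯ + e_{M−1} − (M−1)e_M) meets the set of strictly positive
convex combinations of {e_i − e_j : (i,j) ∈ S₀}. -/
theorem stmt4 (n : ℕ) (hn : 1 ≤ n)
    (S₀ : Finset (Fin (n + 1) × Fin (n + 1)))
    (hout : ∀ i : Fin (n + 1), i ≠ Fin.last n → ∃! j, (i, j) ∈ S₀)
    (hsink : ∀ j, (Fin.last n, j) ∉ S₀)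
    (hconn : ∀ u v : Fin (n + 1), ∃ (s : ℕ) (k : ℕ → Fin (n + 1)),
      k 0 = u ∧ k s = v ∧ ∀ l < s, (k l, k (l + 1)) ∈ S₀ ∨ (k (l + 1), k l) ∈ S₀)
    {V : Type*} [AddCommGroup V] [Module ℝ V] (e : Fin (n + 1) → V) :
    ∃ lam : ℝ, 0 < lam ∧ ∃ c : Fin (n + 1) × Fin (n + 1) → ℝ,
      (∀ p ∈ S₀, 0 < c p) ∧ (∑ p ∈ S₀, c p = 1) ∧
      lam • ((∑ i : Fin n, e i.castSucc) - (n : ℝ) • e (Fin.last n)) =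
        ∑ p ∈ S₀, c p • (e p.1 - e p.2) := by
  classical
  set L := Fin.last n with hLdef
  -- define the successor function f
  have hfc : ∀ i : Fin (n+1), ∃ j : Fin (n+1), (i = L ∧ j = L) ∨ (i ≠ L ∧ (i, j) ∈ S₀) := by
    intro i
    by_cases hi : i = L
    · exact ⟨L, Or.inl ⟨hi, rfl⟩⟩
    · obtain ⟨j, hj, _⟩ := hout i hi
      exact ⟨j, Or.inr ⟨hi, hj⟩⟩
  choose f hf using hfc
  have hfL : f L = L := by
    rcases hf L with ⟨_, h⟩ | ⟨h, _⟩
    · exact h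
    · exact absurd rfl h
  have hf_mem : ∀ i, i ≠ L → (i, f i) ∈ S₀ := by
    intro i hi
    rcases hf i with ⟨h, _⟩ | ⟨_, h⟩
    · exact absurd h hi
    · exact h
  have huniq : ∀ i j, (i, j) ∈ S₀ → i ≠ L ∧ j = f i := by
    intro i j hij
    have hi : i ≠ L := by
      rintro rfl; exact hsink j hij
    obtain ⟨j', _, huj⟩ := hout i hi
    exact ⟨hi, (huj j hij).trans (huj (f i) (hf_mem i hi)).symm⟩
  -- every vertex reaches L under iteration of f
  have key : ∀ u : Fin (n+1), ∃ m, f^[m] u = L := by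
    intro u
    obtain ⟨s, k, hk0, hks, hstep⟩ := hconn u L
    have main : ∀ j, j ≤ s → ∃ m, f^[m] (k (s - j)) = L := by
      intro j
      induction j with
      | zero => intro _; exact ⟨0, by simpa using hks⟩
      | succ j ih =>
        intro hj
        obtain ⟨m, hm⟩ := ih (by omega)
        set a := s - (j + 1) with ha
        have hsa : s - j = a + 1 := by omega
        rw [hsa] at hm
        have hlt : a < s := by omega
        rcases hstep a hlt with h | h
        · -- k a → k (a+1)
          obtain ⟨_, hfa⟩ := huniq _ _ h
          refine ⟨m + 1, ?_⟩
          rw [Function.iterate_succ_apply, ← hfa, hm]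
        · -- k (a+1) → k a
          obtain ⟨hne, hfa⟩ := huniq _ _ h
          match m, hm with
          | 0, hm => exact absurd (by simpa using hm) hne
          | m + 1, hm =>
            refine ⟨m, ?_⟩
            rw [Function.iterate_succ_apply, ← hfa] at hm
            exact hm
    obtain ⟨m, hm⟩ := main s le_rfl
    simp only [Nat.sub_self, hk0] at hm
    exact ⟨m, hm⟩
  -- distance to L
  set d : Fin (n+1) → ℕ := fun u => Nat.find (key u) with hd
  have hdspec : ∀ u, f^[d u] u = L := fun u => Nat.find_spec (key u)
  have hdmin : ∀ u, ∀ t < d u, f^[t] u ≠ L := fun u t ht => Nat.find_min (key u) ht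
  have hstepmem : ∀ (u : Fin (n+1)) (t : ℕ), t < d u → (f^[t] u, f^[t+1] u) ∈ S₀ := by
    intro u t ht
    rw [Function.iterate_succ_apply']
    exact hf_mem _ (hdmin u t ht)
  -- edge-usage counts
  set N : Fin (n+1) × Fin (n+1) → ℕ := fun p =>
    ∑ i : Fin n, ((range (d i.castSucc)).filter
      (fun t => (f^[t] i.castSucc, f^[t+1] i.castSucc) = p)).card with hN
  -- the main vector identity
  have hvec : ∑ p ∈ S₀, (N p : ℝ) • (e p.1 - e p.2)
      = (∑ i : Fin n, e i.castSucc) - (n : ℝ) • e L := by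
    have hrhs : (∑ i : Fin n, e i.castSucc) - (n : ℝ) • e L
        = ∑ i : Fin n, (e i.castSucc - e L) := by
      rw [Finset.sum_sub_distrib, Finset.sum_const, Finset.card_univ, Fintype.card_fin,
        ← Nat.cast_smul_eq_nsmul ℝ]
    rw [hrhs]
    have htele : ∀ u : Fin (n+1),
        e u - e L = ∑ t ∈ range (d u), (e (f^[t] u) - e (f^[t+1] u)) := by
      intro u
      rw [Finset.sum_range_sub' (fun t => e (f^[t] u))]
      simp [hdspec u]
    have hfib : ∀ u : Fin (n+1),
        ∑ t ∈ range (d u), (e (f^[t] u) - e (f^[t+1] u))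
        = ∑ p ∈ S₀, (((range (d u)).filter
            (fun t => (f^[t] u, f^[t+1] u) = p)).card : ℝ) • (e p.1 - e p.2) := by
      intro u
      rw [← Finset.sum_fiberwise_of_maps_to (g := fun t => (f^[t] u, f^[t+1] u))
        (fun t ht => hstepmem u t (Finset.mem_range.mp ht))]
      refine Finset.sum_congr rfl fun p hp => ?_
      rw [Finset.sum_congr rfl (fun t ht => ?_), Finset.sum_const,
        ← Nat.cast_smul_eq_nsmul ℝ]
      obtain ⟨_, ht2⟩ := Finset.mem_filter.mp ht
      rw [← ht2]
    calc ∑ p ∈ S₀, (N p : ℝ) • (e p.1 - e p.2)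
        = ∑ p ∈ S₀, ∑ i : Fin n, (((range (d i.castSucc)).filter
            (fun t => (f^[t] i.castSucc, f^[t+1] i.castSucc) = p)).card : ℝ)
            • (e p.1 - e p.2) := by
          refine Finset.sum_congr rfl fun p _ => ?_
          rw [hN]
          push_cast
          rw [Finset.sum_smul]
      _ = ∑ i : Fin n, ∑ p ∈ S₀, (((range (d i.castSucc)).filter
            (fun t => (f^[t] i.castSucc, f^[t+1] i.castSucc) = p)).card : ℝ)
            • (e p.1 - e p.2) := Finset.sum_comm
      _ = ∑ i : Fin n, (e i.castSucc - e L) := by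
          refine Finset.sum_congr rfl fun i _ => ?_
          rw [← hfib, ← htele]
  -- positivity of counts
  have hNpos : ∀ p ∈ S₀, 1 ≤ N p := by
    intro p hp
    obtain ⟨hne, hfp⟩ := huniq p.1 p.2 hp
    obtain ⟨i, hi⟩ := Fin.exists_castSucc_eq.mpr hne
    have hd1 : 0 < d p.1 := by
      rcases Nat.eq_zero_or_pos (d p.1) with h0 | h
      · exact absurd (by simpa [h0] using hdspec p.1) hne
      · exact h
    have hmem0 : (0 : ℕ) ∈ (range (d p.1)).filter
        (fun t => (f^[t] p.1, f^[t+1] p.1) = p) := by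
      rw [Finset.mem_filter, Finset.mem_range]
      refine ⟨hd1, ?_⟩
      have h01 : f^[0+1] p.1 = f p.1 := by simp
      rw [Function.iterate_zero_apply, h01, ← hfp]
    have h1 : 1 ≤ ((range (d p.1)).filter
        (fun t => (f^[t] p.1, f^[t+1] p.1) = p)).card :=
      Finset.card_pos.mpr ⟨0, hmem0⟩
    calc 1 ≤ ((range (d i.castSucc)).filter
          (fun t => (f^[t] i.castSucc, f^[t+1] i.castSucc) = p)).card := by rw [hi]; exact h1
      _ ≤ N p := Finset.single_le_sum (f := fun i : Fin n => ((range (d i.castSucc)).filter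
          (fun t => (f^[t] i.castSucc, f^[t+1] i.castSucc) = p)).card)
          (fun _ _ => Nat.zero_le _) (Finset.mem_univ i)
  -- S₀ is nonempty
  have hS0ne : S₀.Nonempty := by
    have h0 : (0 : Fin (n+1)) ≠ L := by
      intro h
      have := congrArg Fin.val h
      simp [hLdef, Fin.last] at this
      omega
    exact ⟨(0, f 0), hf_mem 0 h0⟩
  -- total
  set T : ℕ := ∑ p ∈ S₀, N p with hT
  have hTpos : 0 < T := by
    obtain ⟨p, hp⟩ := hS0ne
    calc 0 < 1 := one_pos
      _ ≤ N p := hNpos p hp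
      _ ≤ T := Finset.single_le_sum (fun _ _ => Nat.zero_le _) hp
  have hTR : (0 : ℝ) < (T : ℝ) := by exact_mod_cast hTpos
  refine ⟨(T : ℝ)⁻¹, inv_pos.mpr hTR, fun p => (N p : ℝ) / T, ?_, ?_, ?_⟩
  · intro p hp
    exact div_pos (by exact_mod_cast hNpos p hp) hTR
  · rw [← Finset.sum_div]
    rw [div_eq_one_iff_eq (ne_of_gt hTR)]
    rw [hT]; push_cast; ring
  · rw [← hvec, Finset.smul_sum]
    refine Finset.sum_congr rfl fun p _ => ?_
    simp [smul_smul, div_eq_inv_mul]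
end

section
/- Suppose the point of C(S) closest to the origin is nonzero (equivalently 0 ∉ C(S)). Then there exists a real number λ > 0 with λ·(e₁ + e₂ + ⋯ + e_{M−1} − (M−1)e_M) ∈ C(S) if and only if M is the only vertex of G(S) with no outgoing edges, i.e. there is no j with (M,j) ∈ S and every i ∈ {1,…,M−1} has some j with (i,j) ∈ S. -/
/-!
Write `C` for the convex hull of the edge vectors `e i - e j`, `(i, j) ∈ S`. Along a directed
walk from `i` to `k` the edge vectors add up to `e i - e k`, so `e i - e k` lies in the cone
spanned by `C`. A directed cycle would put `0 = e i - e i` in that cone, hence in `C`; so if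
`0 ∉ C` the graph is acyclic, and on a finite vertex set every walk can be extended until it
reaches a vertex without outgoing edges.

If `M` is the only such vertex, every `i < M` reaches `M`, and summing the walks shows that
`∑ i < M, (e i - e M)` lies in the cone, i.e. a positive multiple of it lies in `C`.
Conversely, by orthogonality the functional `⟪e i, ·⟫` is `≤ 0` on the edge vectors unless
`i` has an outgoing edge, while it is positive on the given ray for `i < M`; so every `i < M`
has an outgoing edge, and by acyclicity some vertex has none, which can only be `M`.
-/

open Relation
open scoped RealInnerProductSpace

theorem Relation.exists_reflTransGen_forall_not_of_acyclic {α : Type*} [Finite α]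
    {r : α → α → Prop} (hr : ∀ a, ¬TransGen r a a) (a : α) :
    ∃ b, ReflTransGen r a b ∧ ∀ c, ¬r b c := by
  have : IsTrans α (flip (TransGen r)) := ⟨fun _ _ _ hab hbc => hbc.trans hab⟩
  have : Std.Irrefl (flip (TransGen r)) := ⟨hr⟩
  obtain ⟨b, hab, hmin⟩ := (Finite.wellFounded_of_trans_of_irrefl (flip (TransGen r))).has_min
    {b | ReflTransGen r a b} ⟨a, .refl⟩
  exact ⟨b, hab, fun c hbc => hmin c (hab.tail hbc) (.single hbc)⟩

theorem Relation.transGen_of_acyclic_of_forall_ne {α : Type*} [Finite α]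
    {r : α → α → Prop} (hr : ∀ a, ¬TransGen r a a) {b : α} (hsucc : ∀ a, a ≠ b → ∃ c, r a c)
    {a : α} (hab : a ≠ b) : TransGen r a b := by
  obtain ⟨k, hak, hk⟩ := exists_reflTransGen_forall_not_of_acyclic hr a
  obtain rfl : k = b := by
    by_contra hkb
    obtain ⟨c, hkc⟩ := hsucc k hkb
    exact hk c hkc
  exact (reflTransGen_iff_eq_or_transGen.1 hak).resolve_left hab.symm

section EdgeVectors

variable {ι V : Type*}

def edgeGraph (S : Set (ι × ι)) : Digraph ι where
  Adj i j := (i, j) ∈ S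

section Module

variable [AddCommGroup V] [Module ℝ V]

def edgeVectors (e : ι → V) (S : Set (ι × ι)) : Set V :=
  (fun p : ι × ι => e p.1 - e p.2) '' S

theorem mem_coneHull_convexHull_iff {s : Set V} {v : V} :
    v ∈ ConvexCone.hull ℝ (convexHull ℝ s) ↔ ∃ lam : ℝ, 0 < lam ∧ lam • v ∈ convexHull ℝ s := by
  rw [ConvexCone.mem_hull_of_convex (convex_convexHull ℝ s)]
  constructor
  · rintro ⟨r, hr, hv⟩
    exact ⟨r⁻¹, inv_pos.2 hr, (Set.mem_smul_set_iff_inv_smul_mem₀ hr.ne' _ _).1 hv⟩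
  · rintro ⟨lam, hlam, hv⟩
    exact ⟨lam⁻¹, inv_pos.2 hlam, (Set.mem_smul_set_iff_inv_smul_mem₀ (inv_ne_zero hlam.ne') _ _).2
      (by rwa [inv_inv])⟩

variable {e : ι → V} {S : Set (ι × ι)}

theorem sub_mem_coneHull_of_transGen {i k : ι} (h : TransGen (edgeGraph S).Adj i k) :
    e i - e k ∈ ConvexCone.hull ℝ (convexHull ℝ (edgeVectors e S)) := by
  have hedge : ∀ {a b}, (edgeGraph S).Adj a b →
      e a - e b ∈ ConvexCone.hull ℝ (convexHull ℝ (edgeVectors e S)) := fun hab =>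
    ConvexCone.subset_hull (subset_convexHull ℝ _ ⟨_, hab, rfl⟩)
  induction h with
  | single hab => exact hedge hab
  | tail _ hjk ih => simpa using add_mem ih (hedge hjk)

theorem zero_mem_convexHull_of_transGen_self {i : ι} (h : TransGen (edgeGraph S).Adj i i) :
    (0 : V) ∈ convexHull ℝ (edgeVectors e S) := by
  obtain ⟨lam, -, hlam⟩ := mem_coneHull_convexHull_iff.1 (sub_mem_coneHull_of_transGen (e := e) h)
  simpa using hlam

end Module

variable [NormedAddCommGroup V] [InnerProductSpace ℝ V] {e : ι → V} {S : Set (ι × ι)}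

theorem exists_edge_of_inner_pos (horth : Pairwise (fun i j => ⟪e i, e j⟫ = 0)) {v : V}
    (hv : v ∈ convexHull ℝ (edgeVectors e S)) {i : ι} (hi : 0 < ⟪e i, v⟫) :
    ∃ j, (i, j) ∈ S := by
  by_contra! hno
  have hsub : edgeVectors e S ⊆ {w | ⟪e i, w⟫ ≤ 0} := by
    rintro _ ⟨⟨a, b⟩, hab, rfl⟩
    have hai : i ≠ a := by rintro rfl; exact hno b hab
    simp only [Set.mem_ofPred_eq, inner_sub_right, horth hai, zero_sub, neg_nonpos]
    by_cases hib : i = b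
    · subst hib; exact real_inner_self_nonneg
    · rw [horth hib]
  exact (convexHull_min hsub (convex_halfSpace_le (innerₛₗ ℝ (e i)).isLinear 0) hv).not_gt hi

end EdgeVectors

theorem inner_castSucc_sum_sub_smul_last {V : Type*} [NormedAddCommGroup V]
    [InnerProductSpace ℝ V] {n : ℕ} {e : Fin (n + 1) → V}
    (horth : Pairwise (fun i j => ⟪e i, e j⟫ = 0)) (i : Fin n) :
    ⟪e i.castSucc, (∑ j : Fin n, e j.castSucc) - (n : ℝ) • e (Fin.last n)⟫ =
      ‖e i.castSucc‖ ^ 2 := by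
  rw [inner_sub_right, inner_sum, inner_smul_right, horth (Fin.castSucc_lt_last i).ne, mul_zero,
    sub_zero, Finset.sum_eq_single i (fun j _ hji => horth ((Fin.castSucc_injective n).ne hji.symm))
      (by simp), real_inner_self_eq_norm_sq]

theorem stmt5_general {V : Type*} [NormedAddCommGroup V] [InnerProductSpace ℝ V]
    (n : ℕ) (hn : 1 ≤ n) (e : Fin (n + 1) → V)
    (he : ∀ i, e i ≠ 0)
    (horth : ∀ i j, i ≠ j → inner ℝ (e i) (e j) = (0 : ℝ))
    (S : Finset (Fin (n + 1) × Fin (n + 1)))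
    (β : V)
    (hmin : ∀ v ∈ convexHull ℝ
      ((fun p : Fin (n + 1) × Fin (n + 1) => e p.1 - e p.2) '' ↑S), ‖β‖ ≤ ‖v‖)
    (hβ : β ≠ 0) :
    (∃ lam : ℝ, 0 < lam ∧
      lam • ((∑ i : Fin n, e i.castSucc) - (n : ℝ) • e (Fin.last n)) ∈
        convexHull ℝ ((fun p : Fin (n + 1) × Fin (n + 1) => e p.1 - e p.2) '' ↑S)) ↔
    ((∀ j, (Fin.last n, j) ∉ S) ∧
      (∀ i : Fin (n + 1), i ≠ Fin.last n → ∃ j, (i, j) ∈ S)) := by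
  have hzero : (0 : V) ∉ convexHull ℝ (edgeVectors e S) := fun h0 =>
    hβ (norm_le_zero_iff.1 (by simpa using hmin 0 h0))
  have hacyc (i : Fin (n + 1)) :
      ¬TransGen (edgeGraph (S : Set (Fin (n + 1) × Fin (n + 1)))).Adj i i :=
    fun hi => hzero (zero_mem_convexHull_of_transGen_self hi)
  constructor
  · rintro ⟨lam, hlam, hv⟩
    have hout : ∀ i, i ≠ Fin.last n → ∃ j, (i, j) ∈ S := by
      intro i hi
      obtain ⟨i, rfl⟩ := Fin.exists_castSucc_eq.2 hi
      refine exists_edge_of_inner_pos horth hv ?_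
      rw [inner_smul_right, inner_castSucc_sum_sub_smul_last horth]
      exact mul_pos hlam (pow_pos (norm_pos_iff.2 (he _)) 2)
    refine ⟨fun j hj => ?_, hout⟩
    obtain ⟨k, -, hk⟩ := exists_reflTransGen_forall_not_of_acyclic hacyc (Fin.last n)
    by_cases hkl : k = Fin.last n
    · exact hk j (hkl ▸ hj)
    · obtain ⟨j', hj'⟩ := hout k hkl
      exact hk j' hj'
  · rintro ⟨-, hout⟩
    have hpath (i : Fin n) : TransGen (edgeGraph (S : Set _)).Adj i.castSucc (Fin.last n) :=
      transGen_of_acyclic_of_forall_ne hacyc hout (Fin.castSucc_lt_last i).ne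
    have hsum : ∑ i : Fin n, (e i.castSucc - e (Fin.last n)) ∈
        ConvexCone.hull ℝ (convexHull ℝ (edgeVectors e S)) :=
      Finset.sum_induction_nonempty _ _ (fun _ _ => add_mem) ⟨⟨0, hn⟩, Finset.mem_univ _⟩
        (fun i _ => sub_mem_coneHull_of_transGen (hpath i))
    rw [Finset.sum_sub_distrib, Finset.sum_const, Finset.card_univ, Fintype.card_fin,
      ← Nat.cast_smul_eq_nsmul ℝ] at hsum
    exact mem_coneHull_convexHull_iff.1 hsum

/-- Proposition 5: If the point of C(S) closest to the origin is nonzero,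
then the ray ℝ₊(e₁ + ⋯ + e_{M−1} − (M−1)e_M) meets C(S) if and only if M (= `Fin.last n`)
is the only vertex of G(S) with no outgoing edges. -/
theorem stmt5 {V : Type*} [NormedAddCommGroup V] [InnerProductSpace ℝ V]
    (n : ℕ) (hn : 1 ≤ n) (e : Fin (n + 1) → V)
    (he : ∀ i, e i ≠ 0)
    (horth : ∀ i j, i ≠ j → inner ℝ (e i) (e j) = (0 : ℝ))
    (S : Finset (Fin (n + 1) × Fin (n + 1))) (hS : S.Nonempty)
    (β : V)
    (hmem : β ∈ convexHull ℝ
      ((fun p : Fin (n + 1) × Fin (n + 1) => e p.1 - e p.2) '' ↑S))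
    (hmin : ∀ v ∈ convexHull ℝ
      ((fun p : Fin (n + 1) × Fin (n + 1) => e p.1 - e p.2) '' ↑S), ‖β‖ ≤ ‖v‖)
    (hβ : β ≠ 0) :
    (∃ lam : ℝ, 0 < lam ∧
      lam • ((∑ i : Fin n, e i.castSucc) - (n : ℝ) • e (Fin.last n)) ∈
        convexHull ℝ ((fun p : Fin (n + 1) × Fin (n + 1) => e p.1 - e p.2) '' ↑S)) ↔
    ((∀ j, (Fin.last n, j) ∉ S) ∧
      (∀ i : Fin (n + 1), i ≠ Fin.last n → ∃ j, (i, j) ∈ S)) :=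
  stmt5_general n hn e he horth S β hmin hβ
end

section
/- Let A₁,…,A_s (s ≥ 1) be nonempty finite subsets of a real inner product space V such that ⟨u,v⟩ = 0 whenever u ∈ A_h and v ∈ A_k with h ≠ k. For each h let β_h be the unique point of the convex hull of A_h closest to the origin, and assume β_h ≠ 0 for every h. Then the unique point of the convex hull of A₁ ∪ ⋯ ∪ A_s closest to the origin is β = (Σ_{h=1}^s ‖β_h‖^{−2})^{−1} · Σ_{h=1}^s β_h/‖β_h‖². -/
/-!
With `w_h = ‖β_h‖⁻²`, the candidate `β` is the center of mass of the `β_h` with weights `w_h`.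
A point `β` of `conv S` has minimal norm as soon as `‖β‖² ≤ ⟪β, a⟫` for all `a ∈ S`, and every
minimal-norm point of a convex set satisfies this inequality. By orthogonality, for `a ∈ A_h`,
`⟪β, a⟫ = (∑ w)⁻¹ w_h ⟪β_h, a⟫ ≥ (∑ w)⁻¹`, with equality for `a = β_h`; averaging these
equalities over `h` gives `‖β‖² = (∑ w)⁻¹`.
-/

open scoped RealInnerProductSpace

open Finset

section

variable {V : Type*} [NormedAddCommGroup V] [InnerProductSpace ℝ V]

lemma inner_eq_zero_of_mem_convexHull {S T : Set V} (h : ∀ u ∈ S, ∀ v ∈ T, ⟪u, v⟫ = 0)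
    {x y : V} (hx : x ∈ convexHull ℝ S) (hy : y ∈ convexHull ℝ T) : ⟪x, y⟫ = 0 :=
  (Submodule.isOrtho_span.2 fun _ hu _ hv => h _ hu _ hv).inner_eq
    (convexHull_min Submodule.subset_span (Submodule.span ℝ S).convex hx)
    (convexHull_min Submodule.subset_span (Submodule.span ℝ T).convex hy)

lemma sq_norm_le_inner_of_forall_norm_le {K : Set V} (hK : Convex ℝ K) {β : V} (hβ : β ∈ K)
    (hmin : ∀ v ∈ K, ‖β‖ ≤ ‖v‖) {w : V} (hw : w ∈ K) : ‖β‖ ^ 2 ≤ ⟪β, w⟫ := by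
  have hinf : ‖0 - β‖ = ⨅ v : K, ‖0 - (v : V)‖ := by
    simpa only [zero_sub, norm_neg] using
      (IsMinOn.iInf_eq hβ (fun v hv => hmin v hv) : ⨅ v : K, ‖(v : V)‖ = ‖β‖).symm
  have := (norm_eq_iInf_iff_real_inner_le_zero hK hβ).1 hinf w hw
  rw [zero_sub, inner_neg_left, inner_sub_right, real_inner_self_eq_norm_sq] at this
  linarith

lemma norm_le_of_forall_sq_norm_le_inner {S : Set V} {β : V}
    (hS : ∀ a ∈ S, ‖β‖ ^ 2 ≤ ⟪β, a⟫) {v : V} (hv : v ∈ convexHull ℝ S) : ‖β‖ ≤ ‖v‖ := by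
  have hlin : IsLinearMap ℝ (⟪β, ·⟫) :=
    ⟨inner_add_right β, fun c y => real_inner_smul_right β y c⟩
  have hβv : ‖β‖ ^ 2 ≤ ⟪β, v⟫ := convexHull_min hS (convex_halfSpace_ge hlin _) hv
  have := hβv.trans (real_inner_le_norm β v)
  nlinarith [norm_nonneg β, norm_nonneg v]

section CenterMass

variable {ι : Type*} [Fintype ι] (w : ι → ℝ) (x : ι → V)

lemma inner_centerMass_of_inner_eq_zero {h : ι} {y : V} (hy : ∀ k ≠ h, ⟪x k, y⟫ = 0) :
    ⟪univ.centerMass w x, y⟫ = (∑ k, w k)⁻¹ * (w h * ⟪x h, y⟫) := by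
  rw [centerMass, real_inner_smul_left, sum_inner]
  congr 1
  rw [sum_eq_single h (fun k _ hk => by rw [real_inner_smul_left, hy k hk, mul_zero]) (by simp),
    real_inner_smul_left]

lemma inner_centerMass_right_of_forall_inner_eq (hw : ∑ k, w k ≠ 0) {y : V} {r : ℝ}
    (hr : ∀ k, ⟪y, x k⟫ = r) : ⟪y, univ.centerMass w x⟫ = r := by
  simp only [centerMass, real_inner_smul_right, inner_sum, hr, ← sum_mul]
  field_simp

end CenterMass

end

theorem stmt6_general {V : Type*} [NormedAddCommGroup V] [InnerProductSpace ℝ V]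
    (s : ℕ) (hs : 1 ≤ s) (A : Fin s → Finset V)
    (horth : ∀ h k, h ≠ k → ∀ u ∈ A h, ∀ v ∈ A k, inner ℝ u v = (0 : ℝ))
    (βf : Fin s → V)
    (hmem : ∀ h, βf h ∈ convexHull ℝ (A h : Set V))
    (hmin : ∀ h, ∀ v ∈ convexHull ℝ (A h : Set V), ‖βf h‖ ≤ ‖v‖)
    (hne : ∀ h, βf h ≠ 0) :
    (∑ h, (‖βf h‖ ^ 2)⁻¹)⁻¹ • (∑ h, (‖βf h‖ ^ 2)⁻¹ • βf h) ∈
        convexHull ℝ (⋃ h, (A h : Set V)) ∧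
      ∀ v ∈ convexHull ℝ (⋃ h, (A h : Set V)),
        ‖(∑ h, (‖βf h‖ ^ 2)⁻¹)⁻¹ • (∑ h, (‖βf h‖ ^ 2)⁻¹ • βf h)‖ ≤ ‖v‖ := by
  have : Nonempty (Fin s) := Fin.pos_iff_nonempty.mp hs
  set w : Fin s → ℝ := fun h => (‖βf h‖ ^ 2)⁻¹
  change univ.centerMass w βf ∈ _ ∧ ∀ v ∈ _, ‖univ.centerMass w βf‖ ≤ ‖v‖
  have hw : ∀ h, 0 < w h := fun h => by have := hne h; positivity
  have hwβ : ∀ h, w h * ‖βf h‖ ^ 2 = 1 := fun h => inv_mul_cancel₀ (by have := hne h; positivity)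
  have hT : 0 < ∑ h, w h := sum_pos (fun h _ => hw h) univ_nonempty
  have hperp : ∀ h, ∀ y ∈ convexHull ℝ (A h : Set V), ∀ k ≠ h, ⟪βf k, y⟫ = 0 :=
    fun h y hy k hk => inner_eq_zero_of_mem_convexHull (horth k h hk) (hmem k) hy
  have hinner : ∀ h, ∀ y ∈ convexHull ℝ (A h : Set V),
      ⟪univ.centerMass w βf, y⟫ = (∑ k, w k)⁻¹ * (w h * ⟪βf h, y⟫) :=
    fun h y hy => inner_centerMass_of_inner_eq_zero w βf (hperp h y hy)
  have hnorm : ‖univ.centerMass w βf‖ ^ 2 = (∑ k, w k)⁻¹ := by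
    rw [← real_inner_self_eq_norm_sq]
    refine inner_centerMass_right_of_forall_inner_eq w βf hT.ne' fun h => ?_
    rw [hinner h _ (hmem h), real_inner_self_eq_norm_sq, hwβ, mul_one]
  refine ⟨(convex_convexHull ℝ _).centerMass_mem (fun h _ => (hw h).le) hT fun h _ =>
    convexHull_mono (Set.subset_iUnion (fun k => (A k : Set V)) h) (hmem h), fun v hv => ?_⟩
  refine norm_le_of_forall_sq_norm_le_inner (fun a ha => ?_) hv
  obtain ⟨h, ha⟩ := Set.mem_iUnion.1 ha
  have hvar := sq_norm_le_inner_of_forall_norm_le (convex_convexHull ℝ _) (hmem h) (hmin h)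
    (subset_convexHull ℝ _ ha)
  calc ‖univ.centerMass w βf‖ ^ 2 = (∑ k, w k)⁻¹ * (w h * ‖βf h‖ ^ 2) := by rw [hnorm, hwβ, mul_one]
    _ ≤ (∑ k, w k)⁻¹ * (w h * ⟪βf h, a⟫) := by gcongr
    _ = ⟪univ.centerMass w βf, a⟫ := (hinner h a (subset_convexHull ℝ _ ha)).symm

/-- If A₁,…,A_s are mutually orthogonal nonempty finite subsets of a real
inner product space and β_h is the (nonzero) closest point to the origin of the convex
hull of A_h, then the closest point to the origin of the convex hull of A₁ ∪ ⋯ ∪ A_s is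
(Σ_h ‖β_h‖⁻²)⁻¹ · Σ_h β_h/‖β_h‖². -/
theorem stmt6 {V : Type*} [NormedAddCommGroup V] [InnerProductSpace ℝ V]
    (s : ℕ) (hs : 1 ≤ s) (A : Fin s → Finset V)
    (hA : ∀ h, (A h).Nonempty)
    (horth : ∀ h k, h ≠ k → ∀ u ∈ A h, ∀ v ∈ A k, inner ℝ u v = (0 : ℝ))
    (βf : Fin s → V)
    (hmem : ∀ h, βf h ∈ convexHull ℝ (A h : Set V))
    (hmin : ∀ h, ∀ v ∈ convexHull ℝ (A h : Set V), ‖βf h‖ ≤ ‖v‖)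
    (hne : ∀ h, βf h ≠ 0) :
    (∑ h, (‖βf h‖ ^ 2)⁻¹)⁻¹ • (∑ h, (‖βf h‖ ^ 2)⁻¹ • βf h) ∈
        convexHull ℝ (⋃ h, (A h : Set V)) ∧
      ∀ v ∈ convexHull ℝ (⋃ h, (A h : Set V)),
        ‖(∑ h, (‖βf h‖ ^ 2)⁻¹)⁻¹ • (∑ h, (‖βf h‖ ^ 2)⁻¹ • βf h)‖ ≤ ‖v‖ :=
  stmt6_general s hs A horth βf hmem hmin hne
end

section
/- For every integer n with 0 ≤ n ≤ 2g, the identity γ₁₂ⁿ ∧ γ̂^{2g−n} = ( Σ_{k=0}^{⌊(2g−n)/2⌋} (−1)^k · (2g−2k)!·(2g−n)!·g! / ((2g−2k−n)!·k!·(g−k)!) ) · Ω holds, where Ω = ⋀_{j=1}^{g} ( d₁ʲ ∧ d₂ʲ ∧ d₁^{j+g} ∧ d₂^{j+g} ) is the top-degree generator. -/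
/-!
For each `j`, the `j`-th summands `τⱼ` of `γ₁₂` and `θⱼ` of `γ̂` are even, hence central, and with
`ωⱼ = d₁ʲ d₂ʲ d₁^{j+g} d₂^{j+g}` they satisfy `θⱼ² = 0`, `τⱼ² = τⱼθⱼ = 2ωⱼ`, `ωⱼτⱼ = ωⱼθⱼ = 0`.
So in the polynomial ring over the centre, `xⱼ = τⱼX + θⱼ` has `xⱼ² = 2ωⱼ(X² + 2X)` and
`xⱼ³ = 0`, which forces `(Σⱼ xⱼ)^{2g} = (2g)! (X² + 2X)^g ∏ⱼ ωⱼ`. Comparing coefficients of `X^m`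
gives `γ₁₂^m γ̂^{2g-m} = m! (2g-m)! [X^m] (X² + 2X)^g · Ω`, and expanding
`(X² + 2X)^g = ((X + 1)² - 1)^g` turns the coefficient into the stated alternating sum.
-/

open Finset Polynomial
open scoped Nat

section DividedSquares

variable {R ι : Type*} [CommSemiring R] {s : Finset ι} {x w : ι → R}

theorem sum_pow_two_mul_card_add_one_eq_zero (hx : ∀ j ∈ s, x j ^ 3 = 0) :
    (∑ j ∈ s, x j) ^ (2 * #s + 1) = 0 := by
  classical
  induction s using Finset.induction_on with
  | empty => simp
  | insert a s ha ih =>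
    rw [sum_insert ha, card_insert_of_notMem ha]
    exact (Commute.all _ _).add_pow_eq_zero_of_add_le_succ_of_pow_eq_zero
      (hx a (mem_insert_self a s)) (ih fun j hj => hx j (mem_insert_of_mem hj)) (by omega)

theorem sum_pow_two_mul_card_eq_factorial_mul_prod (hx2 : ∀ j ∈ s, x j ^ 2 = 2 * w j)
    (hx3 : ∀ j ∈ s, x j ^ 3 = 0) :
    (∑ j ∈ s, x j) ^ (2 * #s) = (2 * #s)! * ∏ j ∈ s, w j := by
  classical
  induction s using Finset.induction_on with
  | empty => simp
  | insert a s ha ih =>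
    have hX := sum_pow_two_mul_card_add_one_eq_zero fun j hj => hx3 j (mem_insert_of_mem hj)
    -- only the `i = 2` binomial term survives: the others contain `x a ^ 3` or `hX`'s power
    rw [sum_insert ha, card_insert_of_notMem ha, prod_insert ha, add_pow, sum_eq_single 2]
    · have hfact := Nat.choose_mul_factorial_mul_factorial (show 2 ≤ 2 * (#s + 1) by omega)
      rw [show 2 * (#s + 1) - 2 = 2 * #s by omega] at hfact ⊢
      rw [ih (fun j hj => hx2 j (mem_insert_of_mem hj)) (fun j hj => hx3 j (mem_insert_of_mem hj)),
        hx2 a (mem_insert_self a s), ← hfact]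
      push_cast
      ring
    · intro i _ hi
      rcases lt_or_gt_of_ne hi with hi | hi
      · rw [pow_eq_zero_of_le (by omega) hX, mul_zero, zero_mul]
      · rw [pow_eq_zero_of_le hi (hx3 a (mem_insert_self a s)), zero_mul, zero_mul]
    · intro h
      rw [mem_range] at h
      omega

end DividedSquares

theorem Polynomial.coeff_X_sq_add_two_mul_X_pow {R : Type*} [CommRing R] (g m : ℕ) :
    ((X ^ 2 + 2 * X : R[X]) ^ g).coeff m =
      ∑ k ∈ range (g + 1), (-1 : R) ^ k * g.choose k * (2 * (g - k)).choose m := by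
  rw [show (X ^ 2 + 2 * X : R[X]) = -1 + (X + 1) ^ 2 by ring, add_pow, finsetSum_coeff]
  refine sum_congr rfl fun k _ => ?_
  rw [← pow_mul, show ((-1 : R[X]) ^ k * (X + 1) ^ (2 * (g - k)) * (g.choose k : R[X])) =
    C ((-1 : R) ^ k * g.choose k) * (X + 1) ^ (2 * (g - k)) by simp; ring, coeff_C_mul,
    coeff_X_add_one_pow]

theorem sum_neg_one_pow_mul_factorial_div_eq (g m : ℕ) (hm : m ≤ 2 * g) :
    ∑ k ∈ range ((2 * g - m) / 2 + 1),
      (-1 : ℝ) ^ k * ((2 * g - 2 * k)! : ℝ) * ((2 * g - m)! : ℝ) * (g ! : ℝ) /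
        (((2 * g - 2 * k - m)! : ℝ) * (k ! : ℝ) * ((g - k)! : ℝ)) =
      (m ! : ℝ) * (2 * g - m)! *
        ∑ k ∈ range (g + 1), (-1 : ℝ) ^ k * g.choose k * (2 * (g - k)).choose m := by
  rw [mul_sum, ← sum_subset (range_subset_range.2 (by omega : (2 * g - m) / 2 + 1 ≤ g + 1))]
  · refine sum_congr rfl fun k hk => ?_
    rw [mem_range] at hk
    rw [show 2 * (g - k) = 2 * g - 2 * k by omega, Nat.cast_choose ℝ (show k ≤ g by omega),
      Nat.cast_choose ℝ (show m ≤ 2 * g - 2 * k by omega)]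
    field_simp
  · intro k hk hk'
    rw [mem_range] at hk hk'
    rw [Nat.choose_eq_zero_of_lt (show 2 * (g - k) < m by omega)]
    simp

section Blocks

variable {A : Type*} [CommRing A]

structure BlockRelations (τ θ ω : A) : Prop where
  θ_sq : θ ^ 2 = 0
  τ_sq : τ ^ 2 = 2 * ω
  τ_mul_θ : τ * θ = 2 * ω
  ω_mul_τ : ω * τ = 0
  ω_mul_θ : ω * θ = 0

namespace BlockRelations

variable {τ θ ω : A}

theorem of_mul_self_eq_zero {a b c d : A} (ha : a * a = 0) (hb : b * b = 0) (hc : c * c = 0)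
    (hd : d * d = 0) (hac : a * c = 0) (had : a * d = 0) (hbc : b * c = 0) (hbd : b * d = 0)
    (hab : a * b = ω) (hcd : c * d = -ω) : BlockRelations (a + b) (c + d + (a + b)) ω where
  θ_sq := by linear_combination ha + hb + hc + hd + 2 * hab + 2 * hcd + 2 * hac + 2 * had +
    2 * hbc + 2 * hbd
  τ_sq := by linear_combination ha + hb + 2 * hab
  τ_mul_θ := by linear_combination ha + hb + 2 * hab + hac + had + hbc + hbd
  ω_mul_τ := by linear_combination -(a + b) * hab + b * ha + a * hb
  ω_mul_θ := by linear_combination -(a + b + c + d) * hab + b * ha + a * hb + b * hac + a * hbd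

variable (h : BlockRelations τ θ ω)
include h

theorem sq_C_mul_X_add_C : (C τ * X + C θ) ^ 2 = 2 * (C ω * (X ^ 2 + 2 * X)) := by
  calc (C τ * X + C θ) ^ 2 = C (τ ^ 2) * X ^ 2 + 2 * C (τ * θ) * X + C (θ ^ 2) := by
        simp only [map_pow, map_mul]; ring
    _ = 2 * (C ω * (X ^ 2 + 2 * X)) := by
        rw [h.τ_sq, h.τ_mul_θ, h.θ_sq]; simp only [map_mul, map_ofNat, map_zero]; ring

theorem pow_three_C_mul_X_add_C : (C τ * X + C θ) ^ 3 = 0 := by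
  calc (C τ * X + C θ) ^ 3 = (C τ * X + C θ) ^ 2 * (C τ * X + C θ) := pow_succ _ _
    _ = 2 * (X ^ 2 + 2 * X) * (C (ω * τ) * X + C (ω * θ)) := by
        rw [h.sq_C_mul_X_add_C]; simp only [map_mul]; ring
    _ = 0 := by rw [h.ω_mul_τ, h.ω_mul_θ]; simp

end BlockRelations

theorem sum_pow_mul_sum_pow_eq_coeff_smul_prod [IsAddTorsionFree A] {ι : Type*} {s : Finset ι}
    {τ θ ω : ι → A} (h : ∀ j ∈ s, BlockRelations (τ j) (θ j) (ω j)) {m : ℕ} (hm : m ≤ 2 * #s) :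
    (∑ j ∈ s, τ j) ^ m * (∑ j ∈ s, θ j) ^ (2 * #s - m) =
      ((m ! * (2 * #s - m)! : ℕ) * ((X ^ 2 + 2 * X : ℤ[X]) ^ #s).coeff m) • ∏ j ∈ s, ω j := by
  have hpow := sum_pow_two_mul_card_eq_factorial_mul_prod (s := s)
    (x := fun j => C (τ j) * X + C (θ j)) (w := fun j => C (ω j) * (X ^ 2 + 2 * X))
    (fun j hj => (h j hj).sq_C_mul_X_add_C) (fun j hj => (h j hj).pow_three_C_mul_X_add_C)
  have hsum : ∑ j ∈ s, (C (τ j) * X + C (θ j)) =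
      (X + C (∑ j ∈ s, θ j)).comp (C (∑ j ∈ s, τ j) * X) := by
    simp [sum_add_distrib, sum_mul, map_sum]
  have hprod : ∏ j ∈ s, C (ω j) * (X ^ 2 + 2 * X) =
      C (∏ j ∈ s, ω j) * ((X ^ 2 + 2 * X : ℤ[X]) ^ #s).map (Int.castRingHom A) := by
    simp [prod_mul_distrib, map_prod, Polynomial.map_pow]
  have hcoeff := congrArg (coeff · m) hpow
  simp only [hsum, hprod, ← pow_comp, comp_C_mul_X_coeff, coeff_X_add_C_pow, coeff_natCast_mul,
    coeff_C_mul, coeff_map, eq_intCast] at hcoeff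
  refine IsAddTorsionFree.nsmul_right_injective (Nat.choose_pos hm).ne' ?_
  simp only [zsmul_eq_mul, nsmul_eq_mul]
  rw [← Nat.choose_mul_factorial_mul_factorial hm] at hcoeff
  push_cast at hcoeff ⊢
  linear_combination hcoeff

end Blocks

namespace ExteriorAlgebra

variable {R M : Type*} [CommRing R] [AddCommGroup M] [Module R M]

theorem ι_mul_ι_anticomm (p q : M) : ι R p * ι R q = -(ι R q * ι R p) :=
  eq_neg_of_add_eq_zero_left (ι_add_mul_swap p q)

theorem ι_mul_ι_mul_ι_mul_ι_swap (p q r t : M) :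
    ι R p * ι R q * (ι R r * ι R t) = -(ι R p * ι R r * (ι R q * ι R t)) := by
  rw [mul_assoc, ← mul_assoc (ι R q), ι_mul_ι_anticomm q r]
  simp only [neg_mul, mul_neg, mul_assoc]

theorem ι_mul_ι_mul_ι_mul_ι_self_left (p q r : M) : ι R p * ι R q * (ι R p * ι R r) = 0 := by
  rw [ι_mul_ι_mul_ι_mul_ι_swap, ι_sq_zero, zero_mul, neg_zero]

theorem ι_mul_ι_mul_ι_mul_ι_self_right (p q r : M) : ι R p * ι R q * (ι R r * ι R q) = 0 := by
  rw [ι_mul_ι_mul_ι_mul_ι_swap, ι_sq_zero, mul_zero, neg_zero]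

theorem ι_mul_ι_mem_center (p q : M) :
    ι R p * ι R q ∈ Subalgebra.center R (ExteriorAlgebra R M) := by
  rw [Subalgebra.mem_center_iff]
  intro z
  induction z using ExteriorAlgebra.induction with
  | algebraMap r => exact Algebra.commutes r _
  | ι v =>
    rw [← mul_assoc, ι_mul_ι_anticomm v p, neg_mul, mul_assoc, ι_mul_ι_anticomm v q, mul_neg,
      neg_neg, mul_assoc]
  | mul y z hy hz => rw [mul_assoc, hz, ← mul_assoc, hy, mul_assoc]
  | add y z hy hz => rw [add_mul, mul_add, hy, hz]

variable (R) in
def ιPair (p q : M) : Subalgebra.center R (ExteriorAlgebra R M) :=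
  ⟨ι R p * ι R q, ι_mul_ι_mem_center p q⟩

@[simp]
theorem coe_ιPair (p q : M) : (ιPair R p q : ExteriorAlgebra R M) = ι R p * ι R q := rfl

theorem blockRelations_ιPair (x y u v : M) :
    BlockRelations (ιPair R x v + ιPair R y u)
      (ιPair R x u + ιPair R y v + (ιPair R x v + ιPair R y u)) (ιPair R x y * ιPair R u v) := by
  refine BlockRelations.of_mul_self_eq_zero (A := Subalgebra.center R (ExteriorAlgebra R M))
    (Subtype.ext (ι_mul_ι_mul_ι_mul_ι_self_left x v v))
    (Subtype.ext (ι_mul_ι_mul_ι_mul_ι_self_left y u u))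
    (Subtype.ext (ι_mul_ι_mul_ι_mul_ι_self_left x u u))
    (Subtype.ext (ι_mul_ι_mul_ι_mul_ι_self_left y v v))
    (Subtype.ext (ι_mul_ι_mul_ι_mul_ι_self_left x v u))
    (Subtype.ext (ι_mul_ι_mul_ι_mul_ι_self_right x v y))
    (Subtype.ext (ι_mul_ι_mul_ι_mul_ι_self_right y u x))
    (Subtype.ext (ι_mul_ι_mul_ι_mul_ι_self_left y u v))
    (Subtype.ext ?_) (Subtype.ext (ι_mul_ι_mul_ι_mul_ι_swap x u y v))
  change ι R x * ι R v * (ι R y * ι R u) = ι R x * ι R y * (ι R u * ι R v)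
  rw [ι_mul_ι_mul_ι_mul_ι_swap, ι_mul_ι_anticomm v u, mul_neg, neg_neg]

end ExteriorAlgebra

/-- In the exterior algebra of a 4g-dimensional real vector space with basis
d₁¹,…,d₁^{2g}, d₂¹,…,d₂^{2g} (indexed here by `Fin 2 × Fin (2*g)`), with
γ₁ = Σ_j d₁ʲ∧d₁^{j+g}, γ₂ = Σ_j d₂ʲ∧d₂^{j+g}, γ₁₂ = Σ_j (d₁ʲ∧d₂^{j+g} + d₂ʲ∧d₁^{j+g}),
γ̂ = γ₁+γ₂+γ₁₂ and Ω = ⋀_j (d₁ʲ∧d₂ʲ∧d₁^{j+g}∧d₂^{j+g}), for 0 ≤ m ≤ 2g one has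
γ₁₂^m ∧ γ̂^{2g−m} = (Σ_{k=0}^{⌊(2g−m)/2⌋} (−1)^k (2g−2k)!(2g−m)!g!/((2g−2k−m)!k!(g−k)!))·Ω. -/
theorem stmt8 {g : ℕ} {V : Type*} [AddCommGroup V] [Module ℝ V]
    (b : Module.Basis (Fin 2 × Fin (2 * g)) ℝ V) (m : ℕ) (hm : m ≤ 2 * g) :
    let d : Fin 2 → Fin (2 * g) → ExteriorAlgebra ℝ V :=
      fun i j => ExteriorAlgebra.ι ℝ (b (i, j))
    let lo : Fin g → Fin (2 * g) := fun j => Fin.castLE (show g ≤ 2 * g by omega) j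
    let hi : Fin g → Fin (2 * g) :=
      fun j => Fin.cast (show g + g = 2 * g by omega) (j.addNat g)
    let γ1 := ∑ j : Fin g, d 0 (lo j) * d 0 (hi j)
    let γ2 := ∑ j : Fin g, d 1 (lo j) * d 1 (hi j)
    let γ12 := ∑ j : Fin g, (d 0 (lo j) * d 1 (hi j) + d 1 (lo j) * d 0 (hi j))
    let Ω := ((List.finRange g).map
      (fun j => d 0 (lo j) * d 1 (lo j) * d 0 (hi j) * d 1 (hi j))).prod
    γ12 ^ m * (γ1 + γ2 + γ12) ^ (2 * g - m) =
      (∑ k ∈ Finset.range ((2 * g - m) / 2 + 1),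
        (-1 : ℝ) ^ k * ((2 * g - 2 * k).factorial : ℝ) * ((2 * g - m).factorial : ℝ) *
            (g.factorial : ℝ) /
          (((2 * g - 2 * k - m).factorial : ℝ) * (k.factorial : ℝ) *
            ((g - k).factorial : ℝ))) • Ω := by
  intro d lo hi γ1 γ2 γ12 Ω
  have := IsAddTorsionFree.of_isTorsionFree ℝ (Subalgebra.center ℝ (ExteriorAlgebra ℝ V))
  let e (i : Fin 2) (j : Fin (2 * g)) := b (i, j)
  let pair := ExteriorAlgebra.ιPair ℝ (M := V)
  let τ j := pair (e 0 (lo j)) (e 1 (hi j)) + pair (e 1 (lo j)) (e 0 (hi j))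
  let θ j := pair (e 0 (lo j)) (e 0 (hi j)) + pair (e 1 (lo j)) (e 1 (hi j)) + τ j
  let ω j := pair (e 0 (lo j)) (e 1 (lo j)) * pair (e 0 (hi j)) (e 1 (hi j))
  have key := sum_pow_mul_sum_pow_eq_coeff_smul_prod (s := univ) (τ := τ) (θ := θ) (ω := ω)
    (fun j _ => ExteriorAlgebra.blockRelations_ιPair _ _ _ _) (m := m) (by simpa using hm)
  simp only [card_univ, Fintype.card_fin] at key
  have hγ12 : γ12 = ↑(∑ j, τ j) := by simp [γ12, τ, pair, d, e]
  have hγ : γ1 + γ2 + γ12 = ↑(∑ j, θ j) := by simp [γ1, γ2, γ12, θ, τ, pair, d, e, sum_add_distrib]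
  have hΩ : Ω = ↑(∏ j, ω j) := by
    rw [Fin.prod_univ_def, SubmonoidClass.coe_list_prod, List.map_map]
    simp [Ω, ω, pair, d, e, mul_assoc, Function.comp_def]
  rw [hγ, hγ12, hΩ, ← Subalgebra.coe_pow, ← Subalgebra.coe_pow, ← Subalgebra.coe_mul, key,
    sum_neg_one_pow_mul_factorial_div_eq g m hm, coeff_X_sq_add_two_mul_X_pow]
  -- the coercion out of the centre commutes with `ℤ`-scaling definitionally, not syntactically
  show ((_ : ℤ) • _ : ExteriorAlgebra ℝ V) = _
  rw [← Int.cast_smul_eq_zsmul ℝ]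
  push_cast
  rfl
end

section
/- For every positive integer m, Σ_{n=1}^{∞} 1/n^{2m} = (−1)^{m+1} · π^{2m} · c_{2m}, where c_{2m} is the coefficient of X^{2m} in the formal power series G; equivalently, the residue at X = 0 of the meromorphic function 1/(X^{2m}(e^{2X} − 1)), which equals c_{2m}, satisfies ζ(2m) = (−1)^{m+1} π^{2m} · res_{X=0} 1/(X^{2m}(e^{2X} − 1)). -/
/-!
Since `B(X) = X / (e^X - 1)` is the generating series of the Bernoulli numbers, `G = B(2X) / 2`,
so `c_{2m} = 2^{2m-1} B_{2m} / (2m)!`. Euler's formula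
`ζ(2m) = (-1)^{m+1} 2^{2m-1} π^{2m} B_{2m} / (2m)!` then gives the claim.
-/

open PowerSeries
open scoped Real Nat

theorem rescale_bernoulliPowerSeries_mul_rescale_exp_sub_one {A : Type*} [CommRing A]
    [Algebra ℚ A] (a : A) :
    rescale a (bernoulliPowerSeries A) * rescale a (exp A - 1) = C a * X := by
  rw [← map_mul, bernoulliPowerSeries_mul_exp_sub_one, rescale_X]

theorem mk_pow_div_factorial_eq_rescale_exp_sub_one (a : ℚ) :
    mk (fun n => if n = 0 then (0 : ℚ) else a ^ n / (n ! : ℚ)) = rescale a (exp ℚ - 1) := by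
  ext (_ | n) <;> rw [coeff_rescale] <;> simp [coeff_exp, div_eq_mul_inv, mul_comm]

theorem coeff_eq_of_mul_rescale_exp_sub_one {a : ℚ} (ha : a ≠ 0) {G : ℚ⟦X⟧}
    (hG : G * rescale a (exp ℚ - 1) = X) (n : ℕ) :
    coeff n G = a ^ n / a * bernoulli n / n ! := by
  have hB : (C a⁻¹ * rescale a (bernoulliPowerSeries ℚ)) * rescale a (exp ℚ - 1) = X := by
    rw [mul_assoc, rescale_bernoulliPowerSeries_mul_rescale_exp_sub_one, ← mul_assoc, ← map_mul,
      inv_mul_cancel₀ ha, map_one, one_mul]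
  have hH : rescale a (exp ℚ - 1) ≠ 0 := fun h => by
    simpa [coeff_rescale, coeff_exp, ha] using congrArg (coeff 1) h
  rw [mul_right_cancel₀ hH (hG.trans hB.symm), coeff_C_mul, coeff_rescale, bernoulliPowerSeries,
    coeff_mk, eq_ratCast, Rat.cast_id]
  ring

theorem hasSum_one_div_nat_add_one_pow_two_mul {k : ℕ} (hk : k ≠ 0) :
    HasSum (fun n : ℕ => 1 / ((n : ℝ) + 1) ^ (2 * k))
      ((-1 : ℝ) ^ (k + 1) * (2 : ℝ) ^ (2 * k - 1) * π ^ (2 * k) * bernoulli (2 * k) / (2 * k)!) := by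
  have h := (hasSum_nat_add_iff' 1).mpr (hasSum_zeta_nat hk)
  simpa [zero_pow (show 2 * k ≠ 0 by omega)] using h

/-- Lemma on ζ(2m): For every positive integer m,
ζ(2m) = Σ_{n≥1} 1/n^{2m} = (−1)^{m+1} π^{2m} c_{2m}, where c_{2m} is the coefficient of
X^{2m} in the formal power series G with G·H = X, H = Σ_{n≥1} 2ⁿXⁿ/n! being the power
series of e^{2X} − 1; c_{2m} is the residue at X = 0 of 1/(X^{2m}(e^{2X} − 1)). -/
theorem stmt10 (m : ℕ) (hm : 1 ≤ m) (G : PowerSeries ℚ)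
    (hG : G * PowerSeries.mk
        (fun n => if n = 0 then (0 : ℚ) else 2 ^ n / (n.factorial : ℚ)) =
      PowerSeries.X) :
    ∑' n : ℕ, 1 / ((n : ℝ) + 1) ^ (2 * m) =
      (-1 : ℝ) ^ (m + 1) * Real.pi ^ (2 * m) *
        ((PowerSeries.coeff (2 * m) G : ℚ) : ℝ) := by
  rw [mk_pow_div_factorial_eq_rescale_exp_sub_one] at hG
  rw [(hasSum_one_div_nat_add_one_pow_two_mul (by omega : m ≠ 0)).tsum_eq,
    coeff_eq_of_mul_rescale_exp_sub_one two_ne_zero hG]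
  have h2 : (2 : ℝ) ^ (2 * m) = 2 ^ (2 * m - 1) * 2 := by
    rw [← pow_succ]; congr 1; omega
  push_cast [h2]
  ring
end

section
/- Let g ≥ 2 be an integer and define Z : (0,∞) → ℝ by Z(ε) = (2π²)^{1−g} · Σ_{n=1}^{∞} e^{−επ²n²}/n^{2g−2}. Then Z is (g−1)-times differentiable on (0,∞) and for every ε > 0 its (g−1)-st derivative satisfies Z^{(g−1)}(ε) = (−1)^{g−1} · 2^{1−g} · ( 1/(2√(πε)) − 1/2 + (1/√(πε)) · Σ_{n=1}^{∞} e^{−n²/ε} ). -/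
/-!
Differentiating termwise (the derivatives are dominated uniformly on `t > ε / 2`), each derivative
multiplies the `n`-th term by `-π²n²`, so after `g - 1` steps the weight `n^{2 - 2g}` cancels and
`Z^{(g-1)}(ε) = (-1)^{g-1} 2^{1-g} ∑_{n ≥ 1} e^{-π (πε) n²}`. Jacobi's transformation
`θ(t) = t^{-1/2} θ(1/t)` of `θ(t) = ∑_{n ∈ ℤ} e^{-π t n²}`, a consequence of Poisson summation,
turns this sum into the stated one.
-/

open Real

section ExpSeries

variable {a l : ℕ → ℝ} {C : ℝ}

theorem summable_mul_pow_mul_exp_neg_mul (ha : ∀ n, ‖a n‖ ≤ C) (hl : ∀ n, 0 ≤ l n) (k : ℕ)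
    {ε : ℝ} (hs : Summable fun n => l n ^ k * exp (-ε * l n)) :
    Summable fun n => a n * (-l n) ^ k * exp (-ε * l n) := by
  refine (hs.mul_left C).of_norm_bounded fun n => ?_
  rw [norm_mul, norm_mul, norm_pow, norm_neg, norm_of_nonneg (hl n), norm_of_nonneg (exp_pos _).le,
    mul_assoc]
  exact mul_le_mul_of_nonneg_right (ha n) (mul_nonneg (pow_nonneg (hl n) k) (exp_pos _).le)

theorem hasDerivAt_tsum_mul_pow_mul_exp_neg_mul (ha : ∀ n, ‖a n‖ ≤ C) (hl : ∀ n, 0 ≤ l n)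
    (hs : ∀ k : ℕ, ∀ δ > 0, Summable fun n => l n ^ k * exp (-δ * l n)) (k : ℕ) {ε : ℝ}
    (hε : 0 < ε) :
    HasDerivAt (fun t => ∑' n, a n * (-l n) ^ k * exp (-t * l n))
      (∑' n, a n * (-l n) ^ (k + 1) * exp (-ε * l n)) ε := by
  have hε₂ : ε / 2 < ε := half_lt_self hε
  refine hasDerivAt_tsum_of_isPreconnected (t := Set.Ioi (ε / 2))
    (g' := fun n t => a n * (-l n) ^ (k + 1) * exp (-t * l n))
    (u := fun n => C * (l n ^ (k + 1) * exp (-(ε / 2) * l n)))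
    ((hs (k + 1) (ε / 2) (half_pos hε)).mul_left C) isOpen_Ioi isPreconnected_Ioi
    (fun n y _ => ?_) (fun n y hy => ?_) hε₂ (summable_mul_pow_mul_exp_neg_mul ha hl k (hs k ε hε))
    hε₂
  · exact (((hasDerivAt_neg y).mul_const (l n)).exp.const_mul (a n * (-l n) ^ k)).congr_deriv
      (by ring)
  · rw [norm_mul, norm_mul, norm_pow, norm_neg, norm_of_nonneg (hl n),
      norm_of_nonneg (exp_pos _).le, mul_assoc]
    have hln := hl n
    have han := ha n
    have hC : 0 ≤ C := (norm_nonneg _).trans han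
    have hy' : ε / 2 ≤ y := le_of_lt hy
    gcongr

end ExpSeries

theorem summable_pow_mul_exp_neg_mul_pi_sq_mul_succ_sq (k : ℕ) {δ : ℝ} (hδ : 0 < δ) :
    Summable fun n : ℕ =>
      (π ^ 2 * ((n : ℝ) + 1) ^ 2) ^ k * exp (-δ * (π ^ 2 * ((n : ℝ) + 1) ^ 2)) := by
  refine ((HurwitzKernelBounds.summable_f_nat (2 * k) 1 (mul_pos hδ pi_pos)).mul_left
    (π ^ (2 * k))).congr fun n => ?_
  simp only [HurwitzKernelBounds.f_nat, mul_pow, pow_mul]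
  ring_nf

theorem tsum_int_exp_neg_pi_mul_sq {t : ℝ} (ht : 0 < t) :
    ∑' n : ℤ, exp (-π * t * (n : ℝ) ^ 2) = 1 + 2 * ∑' n : ℕ, exp (-π * t * ((n : ℝ) + 1) ^ 2) := by
  have hs : Summable fun n : ℕ => exp (-π * t * (n : ℝ) ^ 2) :=
    (HurwitzKernelBounds.summable_f_nat 0 0 ht).congr fun n => by
      simp only [HurwitzKernelBounds.f_nat]; ring_nf
  rw [tsum_int_eq_zero_add_two_mul_tsum_pnat (fun n => by simp)
    (.of_nat_of_neg (by simpa using hs) (by simpa using hs)),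
    tsum_pnat_eq_tsum_succ (f := fun n : ℕ => exp (-π * t * ((n : ℤ) : ℝ) ^ 2))]
  simp

theorem tsum_exp_neg_pi_mul_succ_sq {t : ℝ} (ht : 0 < t) :
    ∑' n : ℕ, exp (-π * t * ((n : ℝ) + 1) ^ 2) =
      1 / (2 * √t) - 1 / 2 + 1 / √t * ∑' n : ℕ, exp (-π * t⁻¹ * ((n : ℝ) + 1) ^ 2) := by
  have theta := tsum_exp_neg_mul_int_sq ht
  rw [← sqrt_eq_rpow, div_eq_mul_inv (-π) t, tsum_int_exp_neg_pi_mul_sq ht,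
    tsum_int_exp_neg_pi_mul_sq (inv_pos.2 ht)] at theta
  linear_combination theta / 2

/-- For Z(ε) = (2π²)^{1−g} Σ_{n≥1} e^{−επ²n²}/n^{2g−2} on (0,∞), Z is
(g−1)-times differentiable on (0,∞) (witnessed by a chain D of successive derivatives)
and Z^{(g−1)}(ε) = (−1)^{g−1} 2^{1−g} (1/(2√(πε)) − 1/2 + (1/√(πε)) Σ_{n≥1} e^{−n²/ε}). -/
theorem stmt11 (g : ℕ) (hg : 2 ≤ g) :
    ∃ D : ℕ → ℝ → ℝ,
      (D 0 = fun ε => (2 * π ^ 2) ^ ((1 : ℤ) - g) *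
        ∑' n : ℕ, Real.exp (-ε * π ^ 2 * ((n : ℝ) + 1) ^ 2) /
          ((n : ℝ) + 1) ^ (2 * g - 2)) ∧
      (∀ k < g - 1, ∀ ε : ℝ, 0 < ε → HasDerivAt (D k) (D (k + 1) ε) ε) ∧
      (∀ ε : ℝ, 0 < ε →
        D (g - 1) ε = (-1 : ℝ) ^ (g - 1) * (2 : ℝ) ^ ((1 : ℤ) - g) *
          (1 / (2 * Real.sqrt (π * ε)) - 1 / 2 +
            (1 / Real.sqrt (π * ε)) *
              ∑' n : ℕ, Real.exp (-((n : ℝ) + 1) ^ 2 / ε))) := by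
  obtain ⟨m, rfl⟩ : ∃ m, g = m + 1 := ⟨g - 1, by omega⟩
  set l : ℕ → ℝ := fun n => π ^ 2 * ((n : ℝ) + 1) ^ 2
  set a : ℕ → ℝ := fun n => 1 / ((n : ℝ) + 1) ^ (2 * (m + 1) - 2)
  have ha (n : ℕ) : ‖a n‖ ≤ 1 := by
    rw [norm_of_nonneg (by positivity)]
    exact div_le_one_of_le₀ (one_le_pow₀ (by linarith [n.cast_nonneg (α := ℝ)])) (by positivity)
  refine ⟨fun k ε => (2 * π ^ 2) ^ ((1 : ℤ) - (m + 1 : ℕ)) *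
    ∑' n, a n * (-l n) ^ k * exp (-ε * l n), ?_, fun k _ ε hε => ?_, fun ε hε => ?_⟩
  · ext ε
    simp only [a, l, pow_zero, mul_one, one_div, ← mul_assoc, inv_mul_eq_div]
  · exact (hasDerivAt_tsum_mul_pow_mul_exp_neg_mul ha (fun n => by positivity)
      summable_pow_mul_exp_neg_mul_pi_sq_mul_succ_sq k hε).const_mul _
  · have hterm (n : ℕ) : a n * (-l n) ^ m * exp (-ε * l n) =
        (-π ^ 2) ^ m * exp (-π * (π * ε) * ((n : ℝ) + 1) ^ 2) := by
      simp only [a, l, show 2 * (m + 1) - 2 = 2 * m by omega, pow_mul, ← neg_mul, mul_pow]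
      field_simp
    have hdual (n : ℕ) :
        exp (-π * (π * ε)⁻¹ * ((n : ℝ) + 1) ^ 2) = exp (-((n : ℝ) + 1) ^ 2 / ε) := by
      congr 1
      field_simp
    simp only [Nat.add_sub_cancel]
    rw [tsum_congr hterm, tsum_mul_left, tsum_exp_neg_pi_mul_succ_sq (by positivity),
      tsum_congr hdual]
    have hconst : (2 * π ^ 2) ^ ((1 : ℤ) - (m + 1 : ℕ)) * (-π ^ 2) ^ m =
        (-1) ^ m * (2 : ℝ) ^ ((1 : ℤ) - (m + 1 : ℕ)) := by
      rw [show (1 : ℤ) - (m + 1 : ℕ) = -m by push_cast; ring, zpow_neg, zpow_neg, zpow_natCast,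
        zpow_natCast, neg_pow, mul_pow]
      field_simp
    rw [← mul_assoc, hconst]
end

section
/- Let g ≥ 2 be an integer and δ > 0 a real number. Define F : (0,∞) → ℂ by F(ε) = ∫_{−∞}^{∞} e^{−ε(t−iδ)²} · (t−iδ)^{−(2g−2)} dt. Then F is (g−1)-times differentiable on (0,∞) and its (g−1)-st derivative satisfies F^{(g−1)}(ε) = (−1)^{g−1} · √(π/ε) for every ε > 0. -/
/-! Differentiating under the integral sign, `∂/∂ε` turns the integrand
`e^{-ε z²} z^{-(m+2)}` (with `z = t - iδ`) into `-e^{-ε z²} z^{-m}`, the factor `z²` cancelling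
two powers of `z`. On the line `Im z = -δ` one has `‖z‖ ≥ |δ|` and
`‖e^{-ε z²}‖ = e^{εδ²} e^{-εt²}`, which gives locally uniform Gaussian domination. After `g - 1`
differentiations the power of `z` is gone, and the remaining shifted Gaussian integral equals
`√(π/ε)` by contour shifting (`GaussianFourier.integral_cexp_neg_mul_sq_add_real_mul_I`). -/

open MeasureTheory Real Complex

noncomputable def shiftedGaussianInvPow (δ : ℝ) (m : ℕ) (ε t : ℝ) : ℂ :=
  Complex.exp (-(ε : ℂ) * ((t : ℂ) - I * δ) ^ 2) * (((t : ℂ) - I * δ) ^ m)⁻¹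

section

variable {δ : ℝ}

lemma ofReal_sub_I_mul_ne_zero (hδ : δ ≠ 0) (t : ℝ) : (t : ℂ) - I * δ ≠ 0 := by
  intro h
  simpa [hδ] using congrArg Complex.im h

lemma abs_le_norm_ofReal_sub_I_mul (δ t : ℝ) : |δ| ≤ ‖(t : ℂ) - I * δ‖ := by
  simpa using Complex.abs_im_le_norm ((t : ℂ) - I * δ)

lemma continuous_shiftedGaussianInvPow (hδ : δ ≠ 0) (m : ℕ) (ε : ℝ) :
    Continuous (shiftedGaussianInvPow δ m ε) :=
  .mul (by fun_prop) (.inv₀ (by fun_prop) fun t => pow_ne_zero _ (ofReal_sub_I_mul_ne_zero hδ t))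

lemma norm_shiftedGaussianInvPow_le (hδ : δ ≠ 0) (m : ℕ) (ε t : ℝ) :
    ‖shiftedGaussianInvPow δ m ε t‖ ≤
      Real.exp (ε * δ ^ 2) * (|δ| ^ m)⁻¹ * Real.exp (-ε * t ^ 2) := by
  have h_exp : ‖Complex.exp (-(ε : ℂ) * ((t : ℂ) - I * δ) ^ 2)‖
      = Real.exp (ε * δ ^ 2) * Real.exp (-ε * t ^ 2) := by
    rw [Complex.norm_exp, ← Real.exp_add]
    congr 1
    simp only [pow_two, neg_mul, neg_re, mul_re, ofReal_re, sub_re, I_re, zero_mul, I_im,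
      ofReal_im, mul_zero, sub_self, sub_zero, sub_im, mul_im, one_mul, zero_add, zero_sub, mul_neg,
      neg_neg]
    ring
  have h_inv : ‖(((t : ℂ) - I * δ) ^ m)⁻¹‖ ≤ (|δ| ^ m)⁻¹ := by
    rw [norm_inv, norm_pow]
    exact inv_anti₀ (pow_pos (abs_pos.2 hδ) m)
      (pow_le_pow_left₀ (abs_nonneg δ) (abs_le_norm_ofReal_sub_I_mul δ t) m)
  calc ‖shiftedGaussianInvPow δ m ε t‖
      = Real.exp (ε * δ ^ 2) * Real.exp (-ε * t ^ 2) * ‖(((t : ℂ) - I * δ) ^ m)⁻¹‖ := by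
        rw [shiftedGaussianInvPow, norm_mul, h_exp]
    _ ≤ Real.exp (ε * δ ^ 2) * Real.exp (-ε * t ^ 2) * (|δ| ^ m)⁻¹ := by gcongr
    _ = _ := by ring

lemma integrable_shiftedGaussianInvPow (hδ : δ ≠ 0) (m : ℕ) {ε : ℝ} (hε : 0 < ε) :
    Integrable (shiftedGaussianInvPow δ m ε) :=
  ((integrable_exp_neg_mul_sq hε).const_mul (Real.exp (ε * δ ^ 2) * (|δ| ^ m)⁻¹)).mono'
    (continuous_shiftedGaussianInvPow hδ m ε).aestronglyMeasurable
    (.of_forall (norm_shiftedGaussianInvPow_le hδ m ε))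

lemma hasDerivAt_shiftedGaussianInvPow_add_two (hδ : δ ≠ 0) (m : ℕ) (ε t : ℝ) :
    HasDerivAt (fun ε => shiftedGaussianInvPow δ (m + 2) ε t)
      (-shiftedGaussianInvPow δ m ε t) ε := by
  have hz := ofReal_sub_I_mul_ne_zero hδ t
  unfold shiftedGaussianInvPow
  generalize (t : ℂ) - I * δ = z at hz ⊢
  have h_lin : HasDerivAt (fun ε : ℝ => -(ε : ℂ) * z ^ 2) (-z ^ 2) ε := by
    simpa using (ofRealCLM.hasDerivAt (x := ε)).neg.mul_const (z ^ 2)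
  refine (h_lin.cexp.mul_const (z ^ (m + 2))⁻¹).congr_deriv ?_
  rw [pow_add]
  field_simp

lemma hasDerivAt_integral_shiftedGaussianInvPow_add_two (hδ : δ ≠ 0) (m : ℕ) {ε₀ : ℝ}
    (hε₀ : 0 < ε₀) :
    HasDerivAt (fun ε => ∫ t, shiftedGaussianInvPow δ (m + 2) ε t)
      (-∫ t, shiftedGaussianInvPow δ m ε₀ t) ε₀ := by
  have h_dom : ∀ t, ∀ ε ∈ Set.Ioo (ε₀ / 2) (2 * ε₀), ‖-shiftedGaussianInvPow δ m ε t‖ ≤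
      Real.exp (2 * ε₀ * δ ^ 2) * (|δ| ^ m)⁻¹ * Real.exp (-(ε₀ / 2) * t ^ 2) := by
    intro t ε hε
    rw [norm_neg]
    refine (norm_shiftedGaussianInvPow_le hδ m ε t).trans ?_
    gcongr
    · nlinarith [hε.2, sq_nonneg δ]
    · nlinarith [hε.1, sq_nonneg t]
  have h := hasDerivAt_integral_of_dominated_loc_of_deriv_le (μ := volume)
    (Ioo_mem_nhds (half_lt_self hε₀) (by linarith))
    (.of_forall fun ε => (continuous_shiftedGaussianInvPow hδ (m + 2) ε).aestronglyMeasurable)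
    (integrable_shiftedGaussianInvPow hδ (m + 2) hε₀)
    (continuous_shiftedGaussianInvPow hδ m ε₀).neg.aestronglyMeasurable
    (.of_forall h_dom)
    ((integrable_exp_neg_mul_sq (half_pos hε₀)).const_mul
      (Real.exp (2 * ε₀ * δ ^ 2) * (|δ| ^ m)⁻¹))
    (.of_forall fun t ε _ => hasDerivAt_shiftedGaussianInvPow_add_two hδ m ε t)
  simpa only [integral_neg] using h.2

lemma integral_shiftedGaussianInvPow_zero (δ : ℝ) {ε : ℝ} (hε : 0 < ε) :
    ∫ t, shiftedGaussianInvPow δ 0 ε t = (√(π / ε) : ℂ) := by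
  have h_shift : ∀ t : ℝ, (t : ℂ) - I * δ = t + ((-δ : ℝ) : ℂ) * I := by
    intro t; push_cast; ring
  simp only [shiftedGaussianInvPow, pow_zero, inv_one, mul_one, h_shift]
  rw [GaussianFourier.integral_cexp_neg_mul_sq_add_real_mul_I (by simpa using hε),
    Real.sqrt_eq_rpow, ofReal_cpow (by positivity)]
  push_cast
  rfl

end

theorem stmt14_general (g : ℕ) (δ : ℝ) (hδ : 0 < δ) :
    ∃ D : ℕ → ℝ → ℂ,
      (D 0 = fun ε : ℝ =>
        ∫ t : ℝ, Complex.exp (-(ε : ℂ) * ((t : ℂ) - Complex.I * (δ : ℂ)) ^ 2) *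
          (((t : ℂ) - Complex.I * (δ : ℂ)) ^ (2 * g - 2))⁻¹) ∧
      (∀ k < g - 1, ∀ ε : ℝ, 0 < ε → HasDerivAt (D k) (D (k + 1) ε) ε) ∧
      (∀ ε : ℝ, 0 < ε →
        D (g - 1) ε = (-1 : ℂ) ^ (g - 1) * (Real.sqrt (π / ε) : ℂ)) := by
  refine ⟨fun k ε => (-1) ^ k * ∫ t, shiftedGaussianInvPow δ (2 * (g - 1 - k)) ε t, ?_, ?_, ?_⟩
  · funext ε
    simp [shiftedGaussianInvPow, show 2 * (g - 1) = 2 * g - 2 by omega]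
  · intro k hk ε hε
    have h_index : 2 * (g - 1 - k) = 2 * (g - 1 - (k + 1)) + 2 := by omega
    simp only [h_index]
    have h := (hasDerivAt_integral_shiftedGaussianInvPow_add_two hδ.ne'
      (2 * (g - 1 - (k + 1))) hε).const_mul ((-1 : ℂ) ^ k)
    exact h.congr_deriv (by ring)
  · intro ε hε
    simp [integral_shiftedGaussianInvPow_zero δ hε]

/-- For F(ε) = ∫_ℝ e^{−ε(t−iδ)²}(t−iδ)^{−(2g−2)} dt (δ > 0 fixed), F is
(g−1)-times differentiable on (0,∞) (witnessed by a chain D of successive derivatives)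
and F^{(g−1)}(ε) = (−1)^{g−1} √(π/ε) for every ε > 0. -/
theorem stmt14 (g : ℕ) (hg : 2 ≤ g) (δ : ℝ) (hδ : 0 < δ) :
    ∃ D : ℕ → ℝ → ℂ,
      (D 0 = fun ε : ℝ =>
        ∫ t : ℝ, Complex.exp (-(ε : ℂ) * ((t : ℂ) - Complex.I * (δ : ℂ)) ^ 2) *
          (((t : ℂ) - Complex.I * (δ : ℂ)) ^ (2 * g - 2))⁻¹) ∧
      (∀ k < g - 1, ∀ ε : ℝ, 0 < ε → HasDerivAt (D k) (D (k + 1) ε) ε) ∧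
      (∀ ε : ℝ, 0 < ε →
        D (g - 1) ε = (-1 : ℂ) ^ (g - 1) * (Real.sqrt (π / ε) : ℂ)) :=
  stmt14_general g δ hδ
end
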